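/- arXiv:1911.04055 — 5 statements merged into one kernel-verified Lean document; each statement's English description precedes it below -/
import Mathlib

section
/- For any graph H with at least one edge and with chromatic index c, cms(H) ≥ ⌊|E(H)|/(2c)⌋ − 1. -/
open SimpleGraph

/-- Two edges are adjacent if they are distinct and share a vertex. -/
def EdgesAdj {V : Type*} (e e' : Sym2 V) : Prop :=
  e ≠ e' ∧ ∃ v : V, v ∈ e ∧ v ∈ e'

/-- `ms` of an ordering of a graph, the ordering being given as the list of edges
in increasing label order: the largest `s ∈ {1,…,m}` such that any ordered pair of
adjacent edges `(e,e')` with `ℓ(e) < ℓ(e')` has forward distance at least `s`. -/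
noncomputable def msList {V : Type*} (L : List (Sym2 V)) : ℕ :=
  sSup {s | 1 ≤ s ∧ s ≤ L.length ∧ ∀ i j e e', i < j →
    L[i]? = some e → L[j]? = some e' → EdgesAdj e e' → s ≤ j - i}

/-- `cms` of an ordering of a graph: the largest `s ∈ {1,…,m}` such that every pair of
adjacent edges is at cyclic distance at least `s`. -/
noncomputable def cmsList {V : Type*} (L : List (Sym2 V)) : ℕ :=
  sSup {s | 1 ≤ s ∧ s ≤ L.length ∧ ∀ i j e e', i < j →
    L[i]? = some e → L[j]? = some e' → EdgesAdj e e' →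
    s ≤ min (j - i) (L.length - (j - i))}

/-- `L` is an ordering of `G`: it lists every edge of `G` exactly once. -/
def IsOrdering {V : Type*} (G : SimpleGraph V) (L : List (Sym2 V)) : Prop :=
  L.Nodup ∧ ∀ e, e ∈ L ↔ e ∈ G.edgeSet

/-- Cyclic matching sequenceability of a graph: the maximum of `cmsList` over orderings. -/
noncomputable def cms {V : Type*} (G : SimpleGraph V) : ℕ :=
  sSup {k | ∃ L, IsOrdering G L ∧ cmsList L = k}

/-- Number of edges of a graph. -/
noncomputable def numEdges {V : Type*} (G : SimpleGraph V) : ℕ :=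
  Nat.card G.edgeSet

/-- The chromatic index: the least number of colours in a proper edge colouring. -/
noncomputable def chromaticIndex {V : Type*} (G : SimpleGraph V) : ℕ :=
  sInf {c | ∃ f : G.edgeSet → Fin c, ∀ e e' : G.edgeSet, EdgesAdj e.1 e'.1 → f e ≠ f e'}

/-- The edge set of `G` forms a matching (no two distinct edges share a vertex). -/
def IsMatchingGraph {V : Type*} (G : SimpleGraph V) : Prop :=
  ∀ e ∈ G.edgeSet, ∀ e' ∈ G.edgeSet, ¬ EdgesAdj e e'

/-- `G` is regular of degree `d`. -/
def IsRegularGraph {V : Type*} (G : SimpleGraph V) (d : ℕ) : Prop :=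
  ∀ v : V, Nat.card (G.neighborSet v) = d

/-- A finite set of edges of `G` forming a matching. -/
def IsMatchingSet {V : Type*} (G : SimpleGraph V) (M : Finset (Sym2 V)) : Prop :=
  ↑M ⊆ G.edgeSet ∧ ∀ e ∈ M, ∀ e' ∈ M, ¬ EdgesAdj e e'

/-- The matching number of a graph. -/
noncomputable def matchingNumber {V : Type*} (G : SimpleGraph V) : ℕ :=
  sSup {k | ∃ M : Finset (Sym2 V), IsMatchingSet G M ∧ M.card = k}

/-!
Take a proper edge colouring with `c = χ'(H)` colours and make it equitable by Kempe swaps; with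
`k = ⌊m / 2c⌋`, every colour class is then a matching of at least `2k - 1` edges. List the classes
as consecutive blocks around the cycle. Edges in blocks that are not consecutive are a whole block
apart, so only the edges of a block adjacent to the last `k - 1` edges of the previous block or to
the first `k - 1` edges of the next one are constrained. Since each edge is adjacent to at most two
edges of a matching, there are few of them, and Hall's theorem orders every block so that adjacent
edges are at cyclic distance at least `k - 1`.
-/

open Finset

namespace SimpleGraph

variable {α : Type*} {G : SimpleGraph α}

lemma Reachable.exists_adj_dist_add_one {u v : α} (h : G.Reachable u v) (hne : u ≠ v) :
    ∃ p, G.Adj p v ∧ G.dist u p + 1 = G.dist u v := by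
  obtain ⟨w, hw⟩ := h.exists_walk_length_eq_dist
  have hnil : ¬ w.Nil := Walk.not_nil_of_ne hne
  refine ⟨w.penultimate, w.adj_penultimate hnil, le_antisymm ?_ ?_⟩
  · have := dist_le w.dropLast
    have := Walk.length_dropLast_add_one hnil
    omega
  · obtain ⟨q, hq⟩ := w.dropLast.reachable.exists_walk_length_eq_dist
    have := dist_le (q.concat (w.adj_penultimate hnil))
    rw [Walk.length_concat, hq] at this
    exact this

lemma card_le_card_add_one_of_bipartite [DecidableEq α] [DecidableRel G.Adj] {S T : Finset α}
    {x₀ : α} (hx₀ : x₀ ∈ S) (hST : Disjoint S T) (hS : ∀ y ∈ S, ∀ z, G.Adj y z → z ∈ T)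
    (hT : ∀ z ∈ T, ∀ y, G.Adj z y → y ∈ S) (hdeg : ∀ z ∈ T, #{y ∈ S | G.Adj z y} ≤ 2)
    (hreach : ∀ y ∈ S, G.Reachable x₀ y) : #S ≤ #T + 1 := by
  -- Send each `y ≠ x₀` to a neighbour `par y` one step closer to `x₀`; on `S \ {x₀}` this is
  -- injective, since two children of `z ∈ T` together with `par z` would be three neighbours.
  have hpar : ∀ y, G.Reachable x₀ y → y ≠ x₀ → ∃ p, G.Adj p y ∧ G.dist x₀ p + 1 = G.dist x₀ y :=
    fun y hy hne => hy.exists_adj_dist_add_one (Ne.symm hne)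
  choose! par hpar_adj hpar_dist using hpar
  have hmaps : ∀ y ∈ S.erase x₀, par y ∈ T := fun y hy =>
    hS y (mem_of_mem_erase hy) _
      (hpar_adj y (hreach y (mem_of_mem_erase hy)) (ne_of_mem_erase hy)).symm
  have hinj : Set.InjOn par (S.erase x₀) := by
    intro y hy y' hy' hyy'
    by_contra hne
    simp only [coe_erase, Set.mem_sdiff, mem_coe, Set.mem_singleton_iff] at hy hy'
    obtain ⟨z, hz, hz'⟩ : ∃ z, par y = z ∧ par y' = z := ⟨_, rfl, hyy'.symm⟩
    have hry := hreach y hy.1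
    have hry' := hreach y' hy'.1
    have hzy : G.Adj z y := hz ▸ hpar_adj y hry hy.2
    have hzy' : G.Adj z y' := hz' ▸ hpar_adj y' hry' hy'.2
    have hzT : z ∈ T := hS y hy.1 z hzy.symm
    have hz₀ : z ≠ x₀ := fun h => Finset.disjoint_left.mp hST hx₀ (h ▸ hzT)
    have hrz : G.Reachable x₀ z := hry.trans hzy.symm.reachable
    have hpz := hpar_adj z hrz hz₀
    have hdy : G.dist x₀ z + 1 = G.dist x₀ y := hz ▸ hpar_dist y hry hy.2
    have hdy' : G.dist x₀ z + 1 = G.dist x₀ y' := hz' ▸ hpar_dist y' hry' hy'.2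
    have hdz := hpar_dist z hrz hz₀
    have hthree : 2 < #{y ∈ S | G.Adj z y} := by
      refine two_lt_card.mpr ⟨y, ?_, y', ?_, par z, ?_, hne, ?_, ?_⟩
      · exact mem_filter.mpr ⟨hy.1, hzy⟩
      · exact mem_filter.mpr ⟨hy'.1, hzy'⟩
      · exact mem_filter.mpr ⟨hT z hzT _ hpz.symm, hpz.symm⟩
      · intro h; rw [← h] at hdz; omega
      · intro h; rw [← h] at hdz; omega
    exact (hdeg z hzT).not_gt hthree
  have := card_le_card_of_injOn par hmaps hinj
  rw [card_erase_of_mem hx₀] at this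
  omega

end SimpleGraph

namespace CyclicMatchingSequenceability

variable {V ι : Type*}

lemma _root_.EdgesAdj.symm {e e' : Sym2 V} (h : EdgesAdj e e') : EdgesAdj e' e :=
  ⟨h.1.symm, h.2.imp fun _ hv => ⟨hv.2, hv.1⟩⟩

def IsEdgeMatching (B : Finset (Sym2 V)) : Prop :=
  ∀ e ∈ B, ∀ e' ∈ B, ¬ EdgesAdj e e'

lemma IsEdgeMatching.card_le_one_of_forall_mem {B S : Finset (Sym2 V)} (hB : IsEdgeMatching B)
    (hSB : S ⊆ B) {v : V} (hv : ∀ x ∈ S, v ∈ x) : #S ≤ 1 := by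
  refine card_le_one.mpr fun a ha b hb => ?_
  by_contra hne
  exact hB a (hSB ha) b (hSB hb) ⟨hne, v, hv a ha, hv b hb⟩

lemma IsEdgeMatching.card_le_two_of_forall_edgesAdj {B S : Finset (Sym2 V)}
    (hB : IsEdgeMatching B) (hSB : S ⊆ B) {e : Sym2 V} (he : ∀ x ∈ S, EdgesAdj e x) :
    #S ≤ 2 := by
  classical
  induction e using Sym2.ind with
  | _ u v =>
    calc #S ≤ #({x ∈ S | u ∈ x} ∪ {x ∈ S | v ∈ x}) := by
          refine card_le_card fun x hx => ?_
          obtain ⟨-, w, hw, hwx⟩ := he x hx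
          rcases Sym2.mem_iff.mp hw with rfl | rfl
          · exact mem_union_left _ (mem_filter.mpr ⟨hx, hwx⟩)
          · exact mem_union_right _ (mem_filter.mpr ⟨hx, hwx⟩)
      _ ≤ #{x ∈ S | u ∈ x} + #{x ∈ S | v ∈ x} := card_union_le _ _
      _ ≤ 2 := by
          have := hB.card_le_one_of_forall_mem ((filter_subset _ _).trans hSB)
            (v := u) fun x hx => (mem_filter.mp hx).2
          have := hB.card_le_one_of_forall_mem ((filter_subset _ _).trans hSB)
            (v := v) fun x hx => (mem_filter.mp hx).2
          omega

/-! ### Equitable edge colourings -/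

lemma sum_sq_lt_sum_sq_of_move [Fintype ι] {g g' : ι → ℕ} {i j : ι} (hij : i ≠ j)
    (hi : g' i + 1 = g i) (hj : g' j = g j + 1) (hgap : g j + 2 ≤ g i)
    (hother : ∀ t, t ≠ i → t ≠ j → g' t = g t) :
    ∑ t, g' t ^ 2 < ∑ t, g t ^ 2 := by
  have hdiff : ∑ t, ((g' t : ℤ) ^ 2 - (g t : ℤ) ^ 2) =
      ((g' i : ℤ) ^ 2 - (g i : ℤ) ^ 2) + ((g' j : ℤ) ^ 2 - (g j : ℤ) ^ 2) :=
    Fintype.sum_eq_add i j hij fun t ht => by rw [hother t ht.1 ht.2]; ring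
  have hij' : ((g' i : ℤ) ^ 2 - (g i : ℤ) ^ 2) + ((g' j : ℤ) ^ 2 - (g j : ℤ) ^ 2) =
      2 * ((g j : ℤ) - g i) + 2 := by
    rw [← hi, hj]; push_cast; ring
  rw [Finset.sum_sub_distrib, hij'] at hdiff
  have hgap' : (g j : ℤ) + 2 ≤ g i := by exact_mod_cast hgap
  zify
  linarith

def swapColoursOn [DecidableEq ι] (p : Sym2 V → Prop) [DecidablePred p] (i j : ι)
    (f : Sym2 V → ι) (e : Sym2 V) : ι :=
  if p e then Equiv.swap i j (f e) else f e

lemma card_swapColoursOn_add [DecidableEq ι] (E : Finset (Sym2 V)) (p : Sym2 V → Prop)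
    [DecidablePred p] (i j t : ι) (f : Sym2 V → ι) :
    #{e ∈ E | swapColoursOn p i j f e = t} + #{e ∈ E | f e = t ∧ p e} =
      #{e ∈ E | f e = t} + #{e ∈ E | f e = Equiv.swap i j t ∧ p e} := by
  simp only [card_filter, ← sum_add_distrib]
  refine sum_congr rfl fun e _ => ?_
  by_cases hp : p e <;> simp [swapColoursOn, hp, Equiv.swap_apply_eq_iff, add_comm]

def IsProperOn (E : Finset (Sym2 V)) (f : Sym2 V → ι) : Prop :=
  ∀ e ∈ E, ∀ e' ∈ E, EdgesAdj e e' → f e ≠ f e'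

lemma IsProperOn.isEdgeMatching [DecidableEq ι] {E : Finset (Sym2 V)} {f : Sym2 V → ι}
    (hf : IsProperOn E f) (i : ι) : IsEdgeMatching {e ∈ E | f e = i} := by
  intro e he e' he' hadj
  rw [mem_filter] at he he'
  exact hf e he.1 e' he'.1 hadj (he.2.trans he'.2.symm)

def lineGraphOn (U : Finset (Sym2 V)) : SimpleGraph (Sym2 V) where
  Adj x y := x ∈ U ∧ y ∈ U ∧ EdgesAdj x y
  symm := ⟨fun _ _ h => ⟨h.2.1, h.1, h.2.2.symm⟩⟩
  loopless := ⟨fun _ h => h.2.2.1 rfl⟩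

/-- Kempe chain: some component of the line graph of the classes `i` and `j` has exactly one
more `i`-edge than `j`-edges (at most one more since both classes are matchings), and we swap the
two colours on it. -/
lemma IsProperOn.exists_kempe_swap [DecidableEq V] [DecidableEq ι] {E : Finset (Sym2 V)}
    {f : Sym2 V → ι} (hf : IsProperOn E f) {i j : ι}
    (hgap : #{e ∈ E | f e = j} + 2 ≤ #{e ∈ E | f e = i}) :
    ∃ f', IsProperOn E f' ∧ #{e ∈ E | f' e = i} + 1 = #{e ∈ E | f e = i} ∧
      #{e ∈ E | f' e = j} = #{e ∈ E | f e = j} + 1 ∧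
      ∀ t, t ≠ i → t ≠ j → #{e ∈ E | f' e = t} = #{e ∈ E | f e = t} := by
  classical
  have hij : i ≠ j := by rintro rfl; omega
  set U := {e ∈ E | f e = i} ∪ {e ∈ E | f e = j}
  set mk := (lineGraphOn U).connectedComponentMk
  have hK : ∀ y z, (lineGraphOn U).Adj y z → y ∈ E ∧ z ∈ E ∧ (f y = i ∨ f y = j) ∧
      (f z = i ∨ f z = j) ∧ EdgesAdj y z ∧ mk y = mk z := by
    intro y z hyz
    have hmk : mk y = mk z := SimpleGraph.ConnectedComponent.connectedComponentMk_eq_of_adj hyz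
    obtain ⟨hy, hz, hadj⟩ := hyz
    simp only [U, mem_union, mem_filter] at hy hz
    tauto
  have hfiber : ∀ c, c = i ∨ c = j →
      #{e ∈ E | f e = c} = ∑ C ∈ U.image mk, #{e ∈ E | f e = c ∧ mk e = C} := by
    intro c hc
    have hmaps : Set.MapsTo mk ↑{e ∈ E | f e = c} ↑(U.image mk) := fun e he =>
      mem_image_of_mem mk (by rcases hc with rfl | rfl <;> simp_all [U])
    rw [card_eq_sum_card_fiberwise hmaps]
    simp only [filter_filter]
  obtain ⟨C, -, hC⟩ : ∃ C ∈ U.image mk,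
      #{e ∈ E | f e = j ∧ mk e = C} < #{e ∈ E | f e = i ∧ mk e = C} :=
    exists_lt_of_sum_lt (by rw [← hfiber i (.inl rfl), ← hfiber j (.inr rfl)]; omega)
  obtain ⟨x₀, hx₀⟩ : {e ∈ E | f e = i ∧ mk e = C}.Nonempty := card_pos.mp (by omega)
  have hST : #{e ∈ E | f e = i ∧ mk e = C} ≤ #{e ∈ E | f e = j ∧ mk e = C} + 1 := by
    refine (lineGraphOn U).card_le_card_add_one_of_bipartite hx₀ ?_ ?_ ?_ ?_ ?_
    · exact disjoint_filter.mpr fun e _ h h' => hij (h.1.symm.trans h'.1)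
    · intro y hy z hyz
      have := hf y (hK y z hyz).1 z (hK y z hyz).2.1 (hK y z hyz).2.2.2.2.1
      simp only [mem_filter] at hy ⊢
      grind
    · intro y hy z hyz
      have := hf y (hK y z hyz).1 z (hK y z hyz).2.1 (hK y z hyz).2.2.2.2.1
      simp only [mem_filter] at hy ⊢
      grind
    · intro z hz
      refine (hf.isEdgeMatching i).card_le_two_of_forall_edgesAdj (fun y hy => ?_) (e := z)
        fun y hy => (hK z y (mem_filter.mp hy).2).2.2.2.2.1
      simp only [mem_filter] at hy ⊢
      exact ⟨hy.1.1, hy.1.2.1⟩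
    · intro y hy
      simp only [mem_filter] at hx₀ hy
      exact SimpleGraph.ConnectedComponent.exact (hx₀.2.2.trans hy.2.2.symm)
  refine ⟨swapColoursOn (fun e => mk e = C) i j f, ?_, ?_, ?_, ?_⟩
  · intro e he e' he' hadj
    have hne := hf e he e' he' hadj
    have hcomp : (f e = i ∨ f e = j) → (f e' = i ∨ f e' = j) → mk e = mk e' := fun h h' =>
      SimpleGraph.ConnectedComponent.connectedComponentMk_eq_of_adj
        ⟨by simp only [U, mem_union, mem_filter]; tauto,
          by simp only [U, mem_union, mem_filter]; tauto, hadj⟩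
    unfold swapColoursOn
    grind
  · have := card_swapColoursOn_add E (fun e => mk e = C) i j i f
    rw [Equiv.swap_apply_left] at this
    omega
  · have := card_swapColoursOn_add E (fun e => mk e = C) i j j f
    rw [Equiv.swap_apply_right] at this
    omega
  · intro t hti htj
    have := card_swapColoursOn_add E (fun e => mk e = C) i j t f
    rw [Equiv.swap_apply_of_ne_of_ne hti htj] at this
    omega

/-- Kempe swaps strictly decrease the sum of the squares of the class sizes. -/
lemma IsProperOn.exists_equitable [DecidableEq V] [Fintype ι] [DecidableEq ι]
    {E : Finset (Sym2 V)} {f : Sym2 V → ι} (hf : IsProperOn E f) :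
    ∃ f' : Sym2 V → ι, IsProperOn E f' ∧
      ∀ i j, #{e ∈ E | f' e = i} ≤ #{e ∈ E | f' e = j} + 1 := by
  induction h : ∑ i, #{e ∈ E | f e = i} ^ 2 using Nat.strong_induction_on generalizing f with
  | _ n ih =>
    by_cases hbal : ∀ i j, #{e ∈ E | f e = i} ≤ #{e ∈ E | f e = j} + 1
    · exact ⟨f, hf, hbal⟩
    simp only [not_forall, not_le] at hbal
    obtain ⟨i, j, hgap⟩ := hbal
    have hij : i ≠ j := by rintro rfl; omega
    obtain ⟨f', hf', hi, hj, hother⟩ := hf.exists_kempe_swap (i := i) (j := j) (by omega)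
    exact ih _ (h ▸ sum_sq_lt_sum_sq_of_move hij hi hj (by omega) hother) hf' rfl

/-! ### Separated listings -/

def IsSeparated (s : ℕ) (L : List (Sym2 V)) : Prop :=
  ∀ i j e e', i < j → L[i]? = some e → L[j]? = some e' → EdgesAdj e e' → s ≤ j - i

/-- In `P ++ Q`, the edges at position `a` of `P` and at position `b` of `Q` are
`P.length - a + b` positions apart. -/
def IsSeparatedAcross (s : ℕ) (P Q : List (Sym2 V)) : Prop :=
  ∀ a b e e', P[a]? = some e → Q[b]? = some e' → EdgesAdj e e' → s ≤ P.length - a + b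

lemma isSeparated_of_isEdgeMatching [DecidableEq V] {L : List (Sym2 V)}
    (hL : IsEdgeMatching L.toFinset) (s : ℕ) : IsSeparated s L := fun _ _ _ _ _ hi hj hadj =>
  absurd hadj (hL _ (List.mem_toFinset.mpr (List.mem_of_getElem? hi)) _
    (List.mem_toFinset.mpr (List.mem_of_getElem? hj)))

lemma isSeparatedAcross_of_isEdgeMatching [DecidableEq V] {L : List (Sym2 V)}
    (hL : IsEdgeMatching L.toFinset) (s : ℕ) : IsSeparatedAcross s L L := fun _ _ _ _ hi hj hadj =>
  absurd hadj (hL _ (List.mem_toFinset.mpr (List.mem_of_getElem? hi)) _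
    (List.mem_toFinset.mpr (List.mem_of_getElem? hj)))

lemma IsSeparated.append {s : ℕ} {P Q : List (Sym2 V)} (hP : IsSeparated s P)
    (hQ : IsSeparated s Q) (hPQ : IsSeparatedAcross s P Q) : IsSeparated s (P ++ Q) := by
  intro i j e e' hij hi hj hadj
  have hjlt := (List.getElem?_eq_some_iff.mp hj).1
  rw [List.getElem?_append] at hi hj
  split_ifs at hi hj with hiP hjP hjP
  · exact hP i j e e' hij hi hj hadj
  · have := hPQ i (j - P.length) e e' hi hj hadj
    omega
  · omega
  · have := hQ (i - P.length) (j - P.length) e e' (by omega) hi hj hadj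
    omega

lemma IsSeparatedAcross.append_left {s : ℕ} {P Q : List (Sym2 V)} (h : IsSeparatedAcross s P Q)
    (hP : s ≤ P.length) (P' : List (Sym2 V)) : IsSeparatedAcross s (P' ++ P) Q := by
  intro a b e e' ha hb hadj
  rw [List.getElem?_append] at ha
  rw [List.length_append]
  split_ifs at ha with haP
  · omega
  · have := h (a - P'.length) b e e' ha hb hadj
    have := (List.getElem?_eq_some_iff.mp ha).1
    omega

lemma IsSeparatedAcross.append_right {s : ℕ} {P Q : List (Sym2 V)}
    (h : IsSeparatedAcross s P Q) (hQ : s ≤ Q.length) (Q' : List (Sym2 V)) :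
    IsSeparatedAcross s P (Q ++ Q') := by
  intro a b e e' ha hb hadj
  rw [List.getElem?_append] at hb
  split_ifs at hb with hbQ
  · exact h a b e e' ha hb hadj
  · omega

lemma IsSeparated.le_min {s : ℕ} {L : List (Sym2 V)} (hL : IsSeparated s L)
    (hLL : IsSeparatedAcross s L L) {i j : ℕ} {e e' : Sym2 V} (hij : i < j) (hi : L[i]? = some e)
    (hj : L[j]? = some e') (hadj : EdgesAdj e e') : s ≤ min (j - i) (L.length - (j - i)) := by
  have := hL i j e e' hij hi hj hadj
  have := hLL j i e' e hj hi hadj.symm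
  have := (List.getElem?_eq_some_iff.mp hj).1
  omega

lemma isSeparated_flatMap_range {s : ℕ} {Q : ℕ → List (Sym2 V)} {c : ℕ}
    (hsep : ∀ b < c, IsSeparated s (Q b)) (hlen : ∀ b < c, s ≤ (Q b).length)
    (hstep : ∀ b, b + 1 < c → IsSeparatedAcross s (Q b) (Q (b + 1))) :
    IsSeparated s ((List.range c).flatMap Q) := by
  induction c with
  | zero => intro i j e e' _ hi; simp at hi
  | succ c ih =>
    rw [List.range_succ, List.flatMap_append, List.flatMap_singleton]
    refine (ih (fun b hb => hsep b (by omega)) (fun b hb => hlen b (by omega))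
      (fun b hb => hstep b (by omega))).append (hsep c (by omega)) ?_
    cases c with
    | zero => intro a b e e' ha; simp at ha
    | succ c =>
      rw [List.range_succ, List.flatMap_append, List.flatMap_singleton]
      exact (hstep c (by omega)).append_left (hlen c (by omega)) _

lemma isSeparatedAcross_flatMap_range {s : ℕ} {Q : ℕ → List (Sym2 V)} {c : ℕ}
    (hlen : ∀ b < c, s ≤ (Q b).length)
    (hwrap : ∀ b, b + 1 = c → IsSeparatedAcross s (Q b) (Q 0)) :
    IsSeparatedAcross s ((List.range c).flatMap Q) ((List.range c).flatMap Q) := by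
  cases c with
  | zero => intro a b e e' ha; simp at ha
  | succ c =>
    have hlast : IsSeparatedAcross s (Q c) ((List.range (c + 1)).flatMap Q) := by
      rw [List.range_succ_eq_map, List.flatMap_cons]
      exact (hwrap c rfl).append_right (hlen 0 (by omega)) _
    conv => arg 2; rw [List.range_succ, List.flatMap_append, List.flatMap_singleton]
    exact hlast.append_left (hlen c (by omega)) _

lemma exists_listing_of_injective {α : Type*} [DecidableEq α] (B : Finset α) (f : B → ℕ)
    (hf : Function.Injective f) (hlt : ∀ x, f x < #B) :
    ∃ Q : List α, Q.Nodup ∧ Q.toFinset = B ∧ Q.length = #B ∧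
      ∀ a (ha : a < Q.length), ∃ x : B, x.1 = Q[a] ∧ f x = a := by
  have hbij : Function.Bijective fun x => (⟨f x, hlt x⟩ : Fin #B) := by
    rw [Fintype.bijective_iff_injective_and_card]
    exact ⟨fun x y h => hf (congrArg Fin.val h), by simp⟩
  set σ := Equiv.ofBijective _ hbij
  have hnd : (List.ofFn fun v => (σ.symm v).1).Nodup :=
    List.nodup_ofFn.mpr fun v w h => σ.symm.injective (Subtype.ext h)
  refine ⟨List.ofFn fun v => (σ.symm v).1, hnd, ?_, by simp, fun a ha => ?_⟩
  · ext x
    simp only [List.mem_toFinset, List.mem_ofFn']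
    exact ⟨fun ⟨v, hv⟩ => hv ▸ (σ.symm v).2, fun hx => ⟨σ ⟨x, hx⟩, by simp⟩⟩
  · simp only [List.length_ofFn] at ha
    refine ⟨σ.symm ⟨a, ha⟩, by simp, ?_⟩
    exact congrArg Fin.val (σ.apply_symm_apply ⟨a, ha⟩)

/-- Hall's theorem for the intervals `[l x, #B - 1 - u x]`: for `S ⊆ B` their union contains
`[min l, #B - 1 - min u]`, long enough because few elements have large `l` or large `u`. -/
lemma exists_listing_of_bounds {α : Type*} [DecidableEq α] (B : Finset α) (s : ℕ)
    (hB : 2 * s + 1 ≤ #B) (l u : α → ℕ) (hl : ∀ ρ, 1 ≤ ρ → #{x ∈ B | ρ ≤ l x} ≤ 2 * (s - ρ))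
    (hu : ∀ ρ, 1 ≤ ρ → #{x ∈ B | ρ ≤ u x} ≤ 2 * (s - ρ)) :
    ∃ Q : List α, Q.Nodup ∧ Q.toFinset = B ∧
      ∀ a (ha : a < Q.length), l Q[a] ≤ a ∧ u Q[a] < Q.length - a := by
  have hlt : ∀ (g : α → ℕ), (∀ ρ, 1 ≤ ρ → #{x ∈ B | ρ ≤ g x} ≤ 2 * (s - ρ)) →
      ∀ x ∈ B, 1 ≤ g x → g x < s := fun g hg x hx h1 => by
    have := hg (g x) h1
    have : 0 < #{y ∈ B | g x ≤ g y} := card_pos.mpr ⟨x, mem_filter.mpr ⟨hx, le_rfl⟩⟩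
    omega
  have hsub : ∀ (g : α → ℕ) (S : Finset B) (ρ : ℕ), (∀ x ∈ S, ρ ≤ g x) →
      #S ≤ #{x ∈ B | ρ ≤ g x} := fun g S ρ hS =>
    card_le_card_of_injOn Subtype.val (fun x hx => mem_filter.mpr ⟨x.2, hS x hx⟩)
      Subtype.val_injective.injOn
  have hall : ∀ S : Finset B, #S ≤ #(S.biUnion fun x => Icc (l x) (#B - 1 - u x)) := by
    intro S
    rcases S.eq_empty_or_nonempty with rfl | hS
    · simp
    obtain ⟨xl, hxl, hxl_min⟩ := S.exists_min_image (fun x => l x) hS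
    obtain ⟨xu, hxu, hxu_min⟩ := S.exists_min_image (fun x => u x) hS
    have hl' := hlt l hl
    have hu' := hlt u hu
    have hcover : Icc (l xl) (#B - 1 - u xu) ⊆ S.biUnion fun x => Icc (l x) (#B - 1 - u x) := by
      intro v hv
      rw [mem_Icc] at hv
      rw [mem_biUnion]
      by_cases hv' : v ≤ #B - 1 - u xl
      · exact ⟨xl, hxl, mem_Icc.mpr ⟨hv.1, hv'⟩⟩
      · have := hl' xu xu.2
        have := hu' xl xl.2
        exact ⟨xu, hxu, mem_Icc.mpr ⟨by omega, hv.2⟩⟩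
    have hcard := card_le_card hcover
    rw [Nat.card_Icc] at hcard
    have hSB : #S ≤ #B := by simpa using card_le_univ S
    have := hl' xl xl.2
    have := hu' xu xu.2
    have := hsub l S (l xl) hxl_min
    have := hsub u S (u xu) hxu_min
    have := hl (l xl)
    have := hu (u xu)
    omega
  obtain ⟨f, hf, hfmem⟩ := (all_card_le_biUnion_card_iff_exists_injective _).mp hall
  simp only [mem_Icc] at hfmem
  obtain ⟨Q, hnd, hQB, hlen, hpos⟩ :=
    exists_listing_of_injective B f hf fun x => by have := hfmem x; omega
  refine ⟨Q, hnd, hQB, fun a ha => ?_⟩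
  obtain ⟨x, hxQ, hxa⟩ := hpos a ha
  have := hfmem x
  have := hlt u hu x x.2
  rw [← hxQ]
  omega

open Classical in
noncomputable def adjSup (P : List (Sym2 V)) (g : ℕ → ℕ) (x : Sym2 V) : ℕ :=
  ({a ∈ range P.length | ∃ e ∈ P[a]?, EdgesAdj e x}).sup g

lemma le_adjSup {P : List (Sym2 V)} (g : ℕ → ℕ) {a : ℕ} {e x : Sym2 V} (ha : P[a]? = some e)
    (hadj : EdgesAdj e x) : g a ≤ adjSup P g x := by
  classical
  exact le_sup (mem_filter.mpr ⟨mem_range.mpr (List.getElem?_eq_some_iff.mp ha).1, e, ha, hadj⟩)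

/-- Each position of `P` is adjacent to at most two edges of a matching. -/
lemma IsEdgeMatching.card_filter_le_adjSup_le {B : Finset (Sym2 V)} (hB : IsEdgeMatching B)
    (P : List (Sym2 V)) (g : ℕ → ℕ) {ρ : ℕ} (hρ : 1 ≤ ρ) :
    #{x ∈ B | ρ ≤ adjSup P g x} ≤ 2 * #{a ∈ range P.length | ρ ≤ g a} := by
  classical
  have hsub : {x ∈ B | ρ ≤ adjSup P g x} ⊆
      ({a ∈ range P.length | ρ ≤ g a}).biUnion fun a => {x ∈ B | ∃ e ∈ P[a]?, EdgesAdj e x} := by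
    intro x hx
    obtain ⟨hxB, hxρ⟩ := mem_filter.mp hx
    obtain ⟨a, ha, hga⟩ := (Finset.le_sup_iff (by rw [Nat.bot_eq_zero]; omega)).mp hxρ
    obtain ⟨har, he⟩ := mem_filter.mp ha
    exact mem_biUnion.mpr ⟨a, mem_filter.mpr ⟨har, hga⟩, mem_filter.mpr ⟨hxB, he⟩⟩
  refine (card_le_card hsub).trans ((card_biUnion_le_card_mul _ _ 2 fun a _ => ?_).trans
    (Nat.mul_comm _ _).le)
  cases h : P[a]? with
  | none => simp
  | some e =>
    refine hB.card_le_two_of_forall_edgesAdj (filter_subset _ _) (e := e) fun x hx => ?_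
    simpa [h] using (mem_filter.mp hx).2

lemma IsEdgeMatching.exists_listing_isSeparatedAcross [DecidableEq V] {B : Finset (Sym2 V)}
    (hB : IsEdgeMatching B) {s : ℕ} (hcard : 2 * s + 1 ≤ #B) (P R : List (Sym2 V)) :
    ∃ Q : List (Sym2 V), Q.Nodup ∧ Q.toFinset = B ∧
      IsSeparatedAcross s P Q ∧ IsSeparatedAcross s Q R := by
  -- An edge `x` of `Q` must come at position `s - (P.length - a)` or later for each neighbour
  -- `P[a]`, and at least `s - (b + 1)` positions before the end for each neighbour `R[b]`.
  obtain ⟨Q, hnd, hQB, hpos⟩ := exists_listing_of_bounds B s hcard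
    (adjSup P fun a => s - (P.length - a)) (adjSup R fun b => s - (b + 1))
    (fun ρ hρ => by
      refine (hB.card_filter_le_adjSup_le P _ hρ).trans (Nat.mul_le_mul_left 2 ?_)
      refine (card_le_card fun a ha => ?_).trans
        ((Nat.card_Ico (P.length - (s - ρ)) P.length).trans_le (by omega))
      simp only [mem_filter, mem_range, mem_Ico] at ha ⊢
      omega)
    (fun ρ hρ => by
      refine (hB.card_filter_le_adjSup_le R _ hρ).trans (Nat.mul_le_mul_left 2 ?_)
      refine (card_le_card fun b hb => ?_).trans (card_range (s - ρ)).le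
      simp only [mem_filter, mem_range] at hb ⊢
      omega)
  refine ⟨Q, hnd, hQB, fun a b e e' ha hb hadj => ?_, fun a b e e' ha hb hadj => ?_⟩
  · obtain ⟨hbQ, rfl⟩ := List.getElem?_eq_some_iff.mp hb
    have := (hpos b hbQ).1
    have := le_adjSup (fun a => s - (P.length - a)) ha hadj
    have := (List.getElem?_eq_some_iff.mp ha).1
    omega
  · obtain ⟨haQ, rfl⟩ := List.getElem?_eq_some_iff.mp ha
    have := (hpos a haQ).2
    have := le_adjSup (fun b => s - (b + 1)) hb hadj.symm
    omega

/-- Concatenate the blocks, each listed to be separated from the previous block and from the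
first one; blocks further apart are separated by a whole block. -/
lemma exists_isSeparated_listing_biUnion [DecidableEq V] {B : ℕ → Finset (Sym2 V)} {c s : ℕ}
    (hB : ∀ b < c, IsEdgeMatching (B b)) (hcard : ∀ b < c, 2 * s + 1 ≤ #(B b))
    (hdisj : ∀ b < c, ∀ b' < c, b ≠ b' → Disjoint (B b) (B b')) :
    ∃ L : List (Sym2 V), L.Nodup ∧ L.toFinset = (range c).biUnion B ∧
      IsSeparated s L ∧ IsSeparatedAcross s L L := by
  have hplace : ∀ (b : ℕ) (P R : List (Sym2 V)), ∃ Q : List (Sym2 V), b < c →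
      Q.Nodup ∧ Q.toFinset = B b ∧ IsSeparatedAcross s P Q ∧ IsSeparatedAcross s Q R := by
    intro b P R
    by_cases hb : b < c
    · obtain ⟨Q, hQ⟩ := (hB b hb).exists_listing_isSeparatedAcross (hcard b hb) P R
      exact ⟨Q, fun _ => hQ⟩
    · exact ⟨[], fun h => absurd h hb⟩
  choose place hplace using hplace
  let Q : ℕ → List (Sym2 V) := fun b =>
    Nat.rec (place 0 [] []) (fun b Qb => place (b + 1) Qb (place 0 [] [])) b
  have hQ : ∀ b < c, (Q b).Nodup ∧ (Q b).toFinset = B b := by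
    rintro (_ | b) hb
    · exact ⟨(hplace 0 [] [] hb).1, (hplace 0 [] [] hb).2.1⟩
    · exact ⟨(hplace _ _ _ hb).1, (hplace _ _ _ hb).2.1⟩
  have hlen : ∀ b < c, s ≤ (Q b).length := fun b hb => by
    have := hcard b hb
    rw [← (hQ b hb).2, List.toFinset_card_of_nodup (hQ b hb).1] at this
    omega
  have hmatch : ∀ b < c, IsEdgeMatching (Q b).toFinset := fun b hb => (hQ b hb).2 ▸ hB b hb
  have hwrap : ∀ b, b + 1 = c → IsSeparatedAcross s (Q b) (Q 0) := by
    rintro (_ | b) hb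
    · exact isSeparatedAcross_of_isEdgeMatching (hmatch 0 (by omega)) s
    · exact (hplace (b + 1) (Q b) (Q 0) (by omega)).2.2.2
  refine ⟨(List.range c).flatMap Q, ?_, ?_,
    isSeparated_flatMap_range (fun b hb => isSeparated_of_isEdgeMatching (hmatch b hb) s) hlen
      fun b hb => (hplace (b + 1) (Q b) (Q 0) hb).2.2.1,
    isSeparatedAcross_flatMap_range hlen hwrap⟩
  · refine List.nodup_flatMap.mpr ⟨fun b hb => (hQ b (List.mem_range.mp hb)).1,
      List.nodup_range.pairwise_of_forall_ne fun b hb b' hb' hne e he he' => ?_⟩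
    rw [List.mem_range] at hb hb'
    rw [← List.mem_toFinset, (hQ b hb).2] at he
    rw [← List.mem_toFinset, (hQ b' hb').2] at he'
    exact Finset.disjoint_left.mp (hdisj b hb b' hb' hne) he he'
  · ext e
    simp only [List.mem_toFinset, List.mem_flatMap, List.mem_range, mem_biUnion, mem_range]
    exact exists_congr fun b => and_congr_right fun hb => by
      rw [← List.mem_toFinset, (hQ b hb).2]

lemma cmsList_le_length (L : List (Sym2 V)) : cmsList L ≤ L.length :=
  csSup_le' fun _ hs => hs.2.1

lemma le_cms_of_isSeparated [Fintype V] {H : SimpleGraph V} {L : List (Sym2 V)}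
    (hL : IsOrdering H L) {s : ℕ} (hs : 1 ≤ s) (hsL : s ≤ L.length) (hsep : IsSeparated s L)
    (hwrap : IsSeparatedAcross s L L) : s ≤ cms H := by
  classical
  have hbdd : BddAbove {k | ∃ L, IsOrdering H L ∧ cmsList L = k} := by
    refine ⟨Fintype.card (Sym2 V), ?_⟩
    rintro _ ⟨L', hL', rfl⟩
    exact (cmsList_le_length L').trans hL'.1.length_le_card
  calc s ≤ cmsList L := le_csSup ⟨L.length, fun _ hk => hk.2.1⟩
        ⟨hs, hsL, fun _ _ _ _ hij hi hj hadj => hsep.le_min hwrap hij hi hj hadj⟩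
    _ ≤ cms H := le_csSup hbdd ⟨L, hL, rfl⟩

lemma exists_isProperOn_chromaticIndex {H : SimpleGraph V} [Fintype H.edgeSet]
    (hne : H.edgeSet.Nonempty) :
    ∃ f : Sym2 V → Fin (chromaticIndex H), IsProperOn H.edgeFinset f := by
  classical
  obtain ⟨g, hg⟩ : ∃ g : H.edgeSet → Fin (chromaticIndex H),
      ∀ e e' : H.edgeSet, EdgesAdj e.1 e'.1 → g e ≠ g e' :=
    Nat.sInf_mem (s := {n | ∃ g : H.edgeSet → Fin n,
      ∀ e e' : H.edgeSet, EdgesAdj e.1 e'.1 → g e ≠ g e'})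
    ⟨_, Fintype.equivFin H.edgeSet,
      fun e e' hadj h => hadj.1 (congrArg Subtype.val ((Fintype.equivFin _).injective h))⟩
  obtain ⟨e₀, he₀⟩ := hne
  refine ⟨fun e => if he : e ∈ H.edgeSet then g ⟨e, he⟩ else g ⟨e₀, he₀⟩, ?_⟩
  intro e he e' he' hadj
  rw [mem_edgeFinset] at he he'
  dsimp only
  rw [dif_pos he, dif_pos he']
  exact hg ⟨e, he⟩ ⟨e', he'⟩ hadj

lemma two_mul_add_one_le_card_of_equitable [Fintype ι] [DecidableEq ι] {E : Finset (Sym2 V)}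
    {f : Sym2 V → ι} (hbal : ∀ i j, #{e ∈ E | f e = i} ≤ #{e ∈ E | f e = j} + 1) {s : ℕ}
    (hE : 2 * Fintype.card ι * (s + 1) ≤ #E) (i : ι) : 2 * s + 1 ≤ #{e ∈ E | f e = i} := by
  have hcard : #E ≤ Fintype.card ι * (#{e ∈ E | f e = i} + 1) :=
    calc #E = ∑ j, #{e ∈ E | f e = j} :=
          card_eq_sum_card_fiberwise fun _ _ => mem_coe.mpr (mem_univ _)
      _ ≤ ∑ _j : ι, (#{e ∈ E | f e = i} + 1) := sum_le_sum fun j _ => hbal j i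
      _ = Fintype.card ι * (#{e ∈ E | f e = i} + 1) := by simp
  have : Fintype.card ι * (2 * (s + 1)) ≤ Fintype.card ι * (#{e ∈ E | f e = i} + 1) :=
    calc _ = 2 * Fintype.card ι * (s + 1) := by ring
      _ ≤ _ := hE.trans hcard
  have := Nat.le_of_mul_le_mul_left this (Fintype.card_pos_iff.mpr ⟨i⟩)
  omega

lemma exists_isSeparated_ordering [DecidableEq V] {H : SimpleGraph V} [Fintype H.edgeSet] {c s : ℕ}
    {f : Sym2 V → Fin c} (hf : IsProperOn H.edgeFinset f)
    (hsize : ∀ i, 2 * s + 1 ≤ #{e ∈ H.edgeFinset | f e = i}) :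
    ∃ L, IsOrdering H L ∧ L.length = #H.edgeFinset ∧ IsSeparated s L ∧ IsSeparatedAcross s L L := by
  obtain ⟨L, hnd, hL, hsep, hwrap⟩ := exists_isSeparated_listing_biUnion (s := s)
    (B := fun b => {e ∈ H.edgeFinset | (f e : ℕ) = b}) (c := c)
    (fun b hb => by simpa [Fin.ext_iff] using hf.isEdgeMatching ⟨b, hb⟩)
    (fun b hb => by simpa [Fin.ext_iff] using hsize ⟨b, hb⟩)
    (fun b _ b' _ hne => disjoint_filter.mpr fun e _ h h' => hne (h.symm.trans h'))
  have hLE : L.toFinset = H.edgeFinset := by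
    rw [hL]
    ext e
    simp only [mem_biUnion, mem_range, mem_filter]
    exact ⟨fun ⟨_, _, he, _⟩ => he, fun he => ⟨f e, (f e).2, he, rfl⟩⟩
  refine ⟨L, ⟨hnd, fun e => ?_⟩, ?_, hsep, hwrap⟩
  · rw [← List.mem_toFinset, hLE, mem_edgeFinset]
  · rw [← hLE, List.toFinset_card_of_nodup hnd]

end CyclicMatchingSequenceability

open CyclicMatchingSequenceability

/-- For any graph `H` with at least one edge and chromatic index `c`,
`cms(H) ≥ ⌊|E(H)|/(2c)⌋ - 1`. -/
theorem cms_ge_floor_div_two_chromaticIndex {V : Type*} [Fintype V] (H : SimpleGraph V)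
    (hne : H.edgeSet.Nonempty) :
    numEdges H / (2 * chromaticIndex H) - 1 ≤ cms H := by
  classical
  set k := numEdges H / (2 * chromaticIndex H)
  obtain hk | hk : k ≤ 1 ∨ 2 ≤ k := by omega
  · omega
  have hc : 0 < chromaticIndex H := Nat.pos_of_ne_zero fun h => by simp [k, h] at hk
  have hm : 2 * Fintype.card (Fin (chromaticIndex H)) * (k - 1 + 1) ≤ #H.edgeFinset := by
    rw [Fintype.card_fin, Nat.sub_add_cancel (by omega), edgeFinset_card,
      ← Nat.card_eq_fintype_card]
    exact Nat.mul_div_le _ _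
  obtain ⟨f, hf⟩ := exists_isProperOn_chromaticIndex hne
  obtain ⟨f, hf, hbal⟩ := hf.exists_equitable
  have hsize := two_mul_add_one_le_card_of_equitable hbal hm
  obtain ⟨L, hL, hlen, hsep, hwrap⟩ := exists_isSeparated_ordering hf hsize
  have : 2 * (k - 1) + 1 ≤ L.length := hlen ▸ (hsize ⟨0, hc⟩).trans (card_filter_le _ _)
  exact le_cms_of_isSeparated hL (by omega) (by omega) hsep hwrap
end

section
/- Let t ≥ 2 and let G be a graph that decomposes into pairwise edge-disjoint matchings M_0, …, M_{t−1} (indexed cyclically by ℤ_t), each with at least m ≥ 1 edges, and let ℓ_0, …, ℓ_{t−1} be orderings of M_0, …, M_{t−1} respectively. If, for some s ∈ {1,…,m}, ms(ℓ_i ∨ ℓ_{i+1}) ≥ s for all i ∈ ℤ_t (indices taken modulo t), then cms(G) ≥ s. -/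
open SimpleGraph

namespace CmsAux

variable {α : Type*}

/-- Concatenation of the first `n` blocks. -/
def blocksF (f : ℕ → List α) (n : ℕ) : List α := (List.range n).flatMap f

lemma blocksF_zero (f : ℕ → List α) : blocksF f 0 = [] := rfl

lemma blocksF_succ (f : ℕ → List α) (n : ℕ) :
    blocksF f (n + 1) = blocksF f n ++ f n := by
  simp [blocksF, List.range_succ]

lemma blocksF_length_succ (f : ℕ → List α) (n : ℕ) :
    (blocksF f (n + 1)).length = (blocksF f n).length + (f n).length := by
  rw [blocksF_succ, List.length_append]

lemma blocksF_length_mono (f : ℕ → List α) {a b : ℕ} (h : a ≤ b) :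
    (blocksF f a).length ≤ (blocksF f b).length := by
  induction b with
  | zero => simp_all
  | succ n ih =>
    rcases Nat.lt_or_ge a (n + 1) with h' | h'
    · have := ih (by omega)
      rw [blocksF_length_succ]; omega
    · have : a = n + 1 := by omega
      subst this; rfl

lemma mem_blocksF {f : ℕ → List α} {n : ℕ} {e : α} :
    e ∈ blocksF f n ↔ ∃ k < n, e ∈ f k := by
  simp [blocksF, List.mem_flatMap, List.mem_range]

lemma blocksF_getElem? (f : ℕ → List α) {n a r : ℕ} (ha : a < n) (hr : r < (f a).length) :
    (blocksF f n)[(blocksF f a).length + r]? = (f a)[r]? := by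
  induction n with
  | zero => omega
  | succ k ih =>
    rcases Nat.lt_or_ge a k with h' | h'
    · rw [blocksF_succ, List.getElem?_append, if_pos (by
        have h1 : (blocksF f (a+1)).length ≤ (blocksF f k).length :=
          blocksF_length_mono f (by omega)
        rw [blocksF_length_succ] at h1; omega)]
      exact ih h'
    · have : a = k := by omega
      subst this
      rw [blocksF_succ, List.getElem?_append_right (by omega)]
      congr 1
      omega

lemma blocksF_decomp (f : ℕ → List α) {n i : ℕ} (hi : i < (blocksF f n).length) :
    ∃ a < n, ∃ r < (f a).length, i = (blocksF f a).length + r := by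
  induction n with
  | zero => simp [blocksF_zero] at hi
  | succ k ih =>
    rcases Nat.lt_or_ge i (blocksF f k).length with h' | h'
    · obtain ⟨a, ha, r, hr, hir⟩ := ih h'
      exact ⟨a, by omega, r, hr, hir⟩
    · refine ⟨k, by omega, i - (blocksF f k).length, ?_, by omega⟩
      rw [blocksF_length_succ] at hi; omega

end CmsAux

/-- Extracting the defining property from a lower bound on `msList`. -/
lemma ms_extract {V : Type*} {LAB : List (Sym2 V)} {s : ℕ} (hs1 : 1 ≤ s)
    (h : s ≤ msList LAB) :
    ∀ i j e e', i < j → LAB[i]? = some e → LAB[j]? = some e' → EdgesAdj e e' → s ≤ j - i := by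
  set S : Set ℕ := {s | 1 ≤ s ∧ s ≤ LAB.length ∧ ∀ i j e e', i < j →
    LAB[i]? = some e → LAB[j]? = some e' → EdgesAdj e e' → s ≤ j - i} with hS
  have h' : s ≤ sSup S := h
  have hb : BddAbove S := ⟨LAB.length, fun x hx => hx.2.1⟩
  have hne : S.Nonempty := by
    by_contra hne
    rw [Set.not_nonempty_iff_eq_empty] at hne
    rw [hne, csSup_empty] at h'
    simp only [Nat.bot_eq_zero, Nat.le_zero] at h'
    omega
  obtain ⟨-, -, h3⟩ := Nat.sSup_mem hne hb
  intro i j e e' hij h1 h2 hadj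
  exact le_trans h' (h3 i j e e' hij h1 h2 hadj)

/-- Proposition: if `G` decomposes into matchings `M_0, …, M_{t-1}` (indexed cyclically),
each with at least `m ≥ 1` edges and with orderings `ℓ_0, …, ℓ_{t-1}`, and if for some
`s ∈ {1,…,m}` we have `ms(ℓ_i ∨ ℓ_{i+1}) ≥ s` for all `i ∈ ℤ_t`, then `cms(G) ≥ s`. -/
theorem cms_ge_of_matching_decomposition {V : Type*} [Fintype V] (t : ℕ) (ht : 2 ≤ t)
    (G : SimpleGraph V) (M : ZMod t → SimpleGraph V) (L : ZMod t → List (Sym2 V))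
    (m s : ℕ)
    (hmatch : ∀ i, IsMatchingGraph (M i))
    (hdisj : ∀ i j, i ≠ j → Disjoint (M i).edgeSet (M j).edgeSet)
    (hdec : G.edgeSet = ⋃ i, (M i).edgeSet)
    (hm : 1 ≤ m) (hsize : ∀ i, m ≤ numEdges (M i))
    (hL : ∀ i, IsOrdering (M i) (L i))
    (hs1 : 1 ≤ s) (hsm : s ≤ m)
    (hms : ∀ i, s ≤ msList (L i ++ L (i + 1))) :
    s ≤ cms G := by
  classical
  haveI : NeZero t := ⟨by omega⟩
  set f : ℕ → List (Sym2 V) := fun k => L (k : ZMod t) with hf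
  have hfk : ∀ k : ℕ, f k = L (k : ZMod t) := fun k => rfl
  set LL : List (Sym2 V) := CmsAux.blocksF f t with hLL
  -- each list has length `numEdges (M i)`
  have hcard : ∀ i : ZMod t, numEdges (M i) = (L i).length := by
    intro i
    have hset : (M i).edgeSet = ↑(L i).toFinset := by
      ext e
      simp only [List.coe_toFinset, Set.mem_setOf_eq]
      exact ((hL i).2 e).symm
    rw [numEdges, hset, Nat.card_coe_set_eq, Set.ncard_coe_finset,
      List.toFinset_card_of_nodup (hL i).1]
  have hlen : ∀ k : ℕ, m ≤ (f k).length := by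
    intro k
    have := hsize (k : ZMod t)
    rwa [hcard] at this
  have hN1 : ∀ n, (CmsAux.blocksF f (n+1)).length = (CmsAux.blocksF f n).length + (f n).length :=
    CmsAux.blocksF_length_succ f
  have hstart0 : (CmsAux.blocksF f 0).length = 0 := rfl
  have hstart1 : (CmsAux.blocksF f 1).length = (f 0).length := by
    rw [hN1 0]; omega
  have hsN : s ≤ LL.length := by
    have h1 : (CmsAux.blocksF f 1).length ≤ LL.length :=
      CmsAux.blocksF_length_mono f (by omega)
    have := hlen 0
    omega
  have hinj : ∀ a b : ℕ, a < t → b < t → ((a : ZMod t) = (b : ZMod t)) → a = b := by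
    intro a b ha hb h
    have := congrArg ZMod.val h
    rwa [ZMod.val_cast_of_lt ha, ZMod.val_cast_of_lt hb] at this
  have hmemL : ∀ (k : ZMod t), ∀ e, e ∈ L k → e ∈ (M k).edgeSet := fun k e h => ((hL k).2 e).1 h
  -- main cyclic distance property
  have hmain : ∀ i j e e', i < j → LL[i]? = some e → LL[j]? = some e' → EdgesAdj e e' →
      s ≤ min (j - i) (LL.length - (j - i)) := by
    intro i j e e' hij hLi hLj hadj
    have hjlt : j < LL.length := (List.getElem?_eq_some_iff.mp hLj).1
    obtain ⟨b, hb, rb, hrb, hjb⟩ := CmsAux.blocksF_decomp f hjlt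
    obtain ⟨a, ha, ra, hra, hia⟩ := CmsAux.blocksF_decomp f (lt_trans hij hjlt)
    have hEi : (f a)[ra]? = some e := by
      rw [← CmsAux.blocksF_getElem? f ha hra, ← hia]; exact hLi
    have hEj : (f b)[rb]? = some e' := by
      rw [← CmsAux.blocksF_getElem? f hb hrb, ← hjb]; exact hLj
    have hme : e ∈ (M (a : ZMod t)).edgeSet := by
      apply hmemL
      obtain ⟨h1, h2⟩ := List.getElem?_eq_some_iff.mp hEi
      rw [← hfk a, ← h2]
      exact List.getElem_mem h1
    have hme' : e' ∈ (M (b : ZMod t)).edgeSet := by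
      apply hmemL
      obtain ⟨h1, h2⟩ := List.getElem?_eq_some_iff.mp hEj
      rw [← hfk b, ← h2]
      exact List.getElem_mem h1
    have hab : a ≠ b := by
      intro h
      subst h
      exact hmatch _ e hme e' hme' hadj
    have haltb : a < b := by
      by_contra h
      have hba : b + 1 ≤ a := by omega
      have h1 : (CmsAux.blocksF f (b+1)).length ≤ (CmsAux.blocksF f a).length :=
        CmsAux.blocksF_length_mono f hba
      rw [hN1 b] at h1
      omega
    rw [le_min_iff]
    constructor
    · -- forward distance
      rcases Nat.lt_or_ge (a+1) b with h2 | h2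
      · have h1 : (CmsAux.blocksF f (a+1+1)).length ≤ (CmsAux.blocksF f b).length :=
          CmsAux.blocksF_length_mono f (by omega)
        have h3 := hN1 (a+1)
        have h4 := hN1 a
        have := hlen (a+1)
        omega
      · have hb1 : b = a + 1 := by omega
        subst hb1
        have hcast : ((a : ZMod t) + 1) = (((a+1 : ℕ)) : ZMod t) := by push_cast; ring
        have key := ms_extract hs1 (hms (a : ZMod t)) ra ((L (a : ZMod t)).length + rb) e e'
          (by have : ra < (L (a : ZMod t)).length := by rw [← hfk a]; exact hra
              omega)
          (by rw [List.getElem?_append, if_pos (by rw [← hfk a]; exact hra), ← hfk a]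
              exact hEi)
          (by rw [List.getElem?_append_right (Nat.le_add_right _ _), Nat.add_sub_cancel_left,
                hcast, ← hfk (a+1)]
              exact hEj)
          hadj
        have h4 := hN1 a
        have hfla : (f a).length = (L (a : ZMod t)).length := by rw [hfk a]
        omega
    · -- backward distance
      by_cases hc : a = 0 ∧ b = t - 1
      · obtain ⟨hc1, hc2⟩ := hc
        subst hc1
        subst hc2
        have hcast : (((t - 1 : ℕ)) : ZMod t) + 1 = (((0 : ℕ)) : ZMod t) := by
          have h1 : (((t - 1 : ℕ)) : ZMod t) + 1 = (((t - 1 + 1 : ℕ)) : ZMod t) := by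
            push_cast; ring
          have h2 : t - 1 + 1 = t := by omega
          rw [h1, h2, ZMod.natCast_self, Nat.cast_zero]
        have hadj' : EdgesAdj e' e := by
          obtain ⟨hne, v, hv1, hv2⟩ := hadj
          exact ⟨hne.symm, v, hv2, hv1⟩
        have key := ms_extract hs1 (hms (((t - 1 : ℕ)) : ZMod t)) rb
          ((L (((t - 1 : ℕ)) : ZMod t)).length + ra) e' e
          (by have : rb < (L (((t-1:ℕ)) : ZMod t)).length := by rw [← hfk (t-1)]; exact hrb
              omega)
          (by rw [List.getElem?_append, if_pos (by rw [← hfk (t-1)]; exact hrb), ← hfk (t-1)]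
              exact hEj)
          (by rw [List.getElem?_append_right (Nat.le_add_right _ _), Nat.add_sub_cancel_left,
                hcast, ← hfk 0]
              exact hEi)
          hadj'
        have hNeq : LL.length = (CmsAux.blocksF f (t-1)).length + (f (t-1)).length := by
          have h2 : t - 1 + 1 = t := by omega
          have := hN1 (t-1)
          rw [h2] at this
          exact this
        have hfla : (f (t-1)).length = (L (((t-1:ℕ)) : ZMod t)).length := by rw [hfk (t-1)]
        omega
      · rcases (show 1 ≤ a ∨ b + 2 ≤ t by omega) with h2 | h2
        · have h1 : (CmsAux.blocksF f 1).length ≤ (CmsAux.blocksF f a).length :=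
            CmsAux.blocksF_length_mono f h2
          have := hlen 0
          omega
        · have h1 : (CmsAux.blocksF f (b+1)).length ≤ (CmsAux.blocksF f (t-1)).length :=
            CmsAux.blocksF_length_mono f (by omega)
          have hNeq : LL.length = (CmsAux.blocksF f (t-1)).length + (f (t-1)).length := by
            have h2' : t - 1 + 1 = t := by omega
            have := hN1 (t-1)
            rw [h2'] at this
            exact this
          have := hlen (t-1)
          rw [hN1 b] at h1
          omega
  have hsc : s ≤ cmsList LL := by
    apply le_csSup ⟨LL.length, fun x hx => hx.2.1⟩
    exact ⟨hs1, hsN, hmain⟩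
  -- LL is an ordering of G
  have hnodupF : ∀ n, n ≤ t → (CmsAux.blocksF f n).Nodup := by
    intro n
    induction n with
    | zero => intro _; simp [CmsAux.blocksF_zero]
    | succ k ih =>
      intro hk
      rw [CmsAux.blocksF_succ]
      refine List.Nodup.append (ih (by omega)) (by rw [hfk k]; exact (hL _).1) ?_
      intro x hx hx'
      obtain ⟨c, hc, hxc⟩ := CmsAux.mem_blocksF.mp hx
      have h1 : x ∈ (M (c : ZMod t)).edgeSet := hmemL _ _ (by rw [← hfk c]; exact hxc)
      have h2 : x ∈ (M (k : ZMod t)).edgeSet := hmemL _ _ (by rw [← hfk k]; exact hx')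
      have hck : (c : ZMod t) ≠ (k : ZMod t) := fun h =>
        absurd (hinj c k (by omega) (by omega) h) (by omega)
      exact Set.disjoint_left.mp (hdisj _ _ hck) h1 h2
  have hord : IsOrdering G LL := by
    constructor
    · exact hnodupF t le_rfl
    · intro e
      rw [hdec]
      simp only [Set.mem_iUnion]
      constructor
      · intro h
        obtain ⟨k, hk, hek⟩ := CmsAux.mem_blocksF.mp h
        exact ⟨(k : ZMod t), hmemL _ _ (by rw [← hfk k]; exact hek)⟩
      · rintro ⟨i, hi⟩
        apply CmsAux.mem_blocksF.mpr
        refine ⟨i.val, ZMod.val_lt i, ?_⟩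
        rw [hfk i.val, ZMod.natCast_rightInverse i]
        exact ((hL i).2 e).2 hi
  have hbdd : BddAbove {k | ∃ L', IsOrdering G L' ∧ cmsList L' = k} := by
    refine ⟨Fintype.card (Sym2 V), ?_⟩
    rintro k ⟨L', hL', rfl⟩
    have h1 : cmsList L' ≤ L'.length := csSup_le' (fun x hx => hx.2.1)
    exact le_trans h1 hL'.1.length_le_card
  exact le_trans hsc (le_csSup hbdd ⟨LL, hord, rfl⟩)
end

section
/- Let M_0, M_1, M_2, M_3 be pairwise edge-disjoint matchings, each with at least one edge, of sizes m_0, m_1, m_2, m_3 respectively, such that M_0 ∪ M_1, M_1 ∪ M_2 and M_2 ∪ M_3 are also matchings. Then for any orderings ℓ_0, ℓ_1, ℓ_2, ℓ_3 of M_0, M_1, M_2, M_3 respectively, ms(ℓ_0 ∨ ℓ_1 ∨ ℓ_2 ∨ ℓ_3) ≥ min{ ms(ℓ_0 ∨ ℓ_2) + m_1, ms(ℓ_1 ∨ ℓ_3) + m_2, ms(ℓ_0 ∨ ℓ_3) + m_1 + m_2 }. -/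
open SimpleGraph

/-!
Read `ℓ₀ ∨ ℓ₁ ∨ ℓ₂ ∨ ℓ₃` as `(ℓ₀ ∨ ℓ₁) ∨ (ℓ₂ ∨ ℓ₃)`. Both halves order matchings, so only adjacent
pairs with one edge in each half constrain `ms`, and the pair of blocks `(M₁, M₂)` is excluded
because `M₁ ∪ M₂` is a matching. An adjacent pair with edges in `Mₐ` and `M_b` that lies at
forward distance `d ≥ ms(ℓₐ ∨ ℓ_b)` in `ℓₐ ∨ ℓ_b` lies at distance `d` plus the sizes of the blocks
strictly between `a` and `b` in the long ordering.
-/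

section

variable {V : Type*}

theorem msList_le_length (L : List (Sym2 V)) : msList L ≤ L.length :=
  csSup_le' fun _ hs => hs.2.1

theorem msList_le_sub {L : List (Sym2 V)} {i j : ℕ} {e e' : Sym2 V} (hij : i < j)
    (hi : L[i]? = some e) (hj : L[j]? = some e') (hadj : EdgesAdj e e') :
    msList L ≤ j - i :=
  csSup_le' fun _ hs => hs.2.2 i j e e' hij hi hj hadj

theorem le_msList {L : List (Sym2 V)} {s : ℕ} (hs : s ≤ L.length)
    (h : ∀ i j e e', i < j → L[i]? = some e → L[j]? = some e' → EdgesAdj e e' → s ≤ j - i) :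
    s ≤ msList L := by
  rcases Nat.eq_zero_or_pos s with rfl | hpos
  · exact Nat.zero_le _
  · exact le_csSup ⟨L.length, fun _ hx => hx.2.1⟩ ⟨hpos, hs, h⟩

theorem List.getElem?_append_eq_some {α : Type*} {A B : List α} {i : ℕ} {a : α}
    (h : (A ++ B)[i]? = some a) :
    A[i]? = some a ∨ (A.length ≤ i ∧ B[i - A.length]? = some a) := by
  rw [List.getElem?_append] at h
  split_ifs at h with hi
  · exact Or.inl h
  · exact Or.inr ⟨by omega, h⟩

theorem msList_append_le {A C : List (Sym2 V)} {i k : ℕ} {e e' : Sym2 V}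
    (hi : A[i]? = some e) (hk : C[k]? = some e') (hadj : EdgesAdj e e') :
    msList (A ++ C) + i ≤ A.length + k := by
  have hiA : i < A.length := (List.getElem?_eq_some_iff.1 hi).1
  have := msList_le_sub (L := A ++ C) (i := i) (j := A.length + k) (by omega)
    (by rwa [List.getElem?_append_left hiA]) (by rwa [List.getElem?_append_right (by omega),
      Nat.add_sub_cancel_left]) hadj
  omega

theorem le_msList_append {A B : List (Sym2 V)} {s : ℕ} (hs : s ≤ A.length + B.length)
    (hA : ∀ e ∈ A, ∀ e' ∈ A, ¬ EdgesAdj e e') (hB : ∀ e ∈ B, ∀ e' ∈ B, ¬ EdgesAdj e e')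
    (hAB : ∀ i k e e', A[i]? = some e → B[k]? = some e' → EdgesAdj e e' →
      s + i ≤ A.length + k) :
    s ≤ msList (A ++ B) := by
  refine le_msList (by rwa [List.length_append]) fun i j e e' hij hi hj hadj => ?_
  rcases List.getElem?_append_eq_some hi with hi | ⟨hiA, hi⟩ <;>
    rcases List.getElem?_append_eq_some hj with hj | ⟨hjA, hj⟩
  · exact absurd hadj (hA e (List.mem_of_getElem? hi) e' (List.mem_of_getElem? hj))
  · have := hAB i (j - A.length) e e' hi hj hadj
    omega
  · have hjA : j < A.length := (List.getElem?_eq_some_iff.1 hj).1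
    omega
  · exact absurd hadj (hB e (List.mem_of_getElem? hi) e' (List.mem_of_getElem? hj))

theorem IsOrdering.mem_edgeSet {G : SimpleGraph V} {L : List (Sym2 V)} (hL : IsOrdering G L)
    {e : Sym2 V} (he : e ∈ L) : e ∈ G.edgeSet :=
  (hL.2 e).1 he

theorem IsOrdering.numEdges_eq_length {G : SimpleGraph V} {L : List (Sym2 V)}
    (hL : IsOrdering G L) : numEdges G = L.length := by
  classical
  have hset : G.edgeSet = ↑L.toFinset := by
    ext e
    simp [← hL.2 e]
  rw [numEdges, hset, Nat.card_coe_set_eq, Set.ncard_coe_finset,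
    List.toFinset_card_of_nodup hL.1]

theorem IsMatchingGraph.not_edgesAdj_of_mem_append {G H : SimpleGraph V}
    {A B : List (Sym2 V)} (hGH : IsMatchingGraph (G ⊔ H)) (hA : IsOrdering G A)
    (hB : IsOrdering H B) : ∀ e ∈ A ++ B, ∀ e' ∈ A ++ B, ¬ EdgesAdj e e' := by
  have hmem : ∀ e ∈ A ++ B, e ∈ (G ⊔ H).edgeSet := fun e he => by
    rw [edgeSet_sup]
    exact (List.mem_append.1 he).imp hA.mem_edgeSet hB.mem_edgeSet
  exact fun e he e' he' => hGH e (hmem e he) e' (hmem e' he')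

end

theorem msList_append_four_general {V : Type*} (M : Fin 4 → SimpleGraph V)
    (L : Fin 4 → List (Sym2 V))
    (h01 : IsMatchingGraph (M 0 ⊔ M 1)) (h12 : IsMatchingGraph (M 1 ⊔ M 2))
    (h23 : IsMatchingGraph (M 2 ⊔ M 3))
    (hL : ∀ i, IsOrdering (M i) (L i)) :
    min (msList (L 0 ++ L 2) + numEdges (M 1))
      (min (msList (L 1 ++ L 3) + numEdges (M 2))
        (msList (L 0 ++ L 3) + numEdges (M 1) + numEdges (M 2)))
      ≤ msList (L 0 ++ L 1 ++ L 2 ++ L 3) := by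
  rw [(hL 1).numEdges_eq_length, (hL 2).numEdges_eq_length, List.append_assoc (L 0 ++ L 1)]
  refine le_msList_append ?_ (h01.not_edgesAdj_of_mem_append (hL 0) (hL 1))
    (h23.not_edgesAdj_of_mem_append (hL 2) (hL 3)) fun i k e e' hi hk hadj => ?_
  · have := msList_le_length (L 0 ++ L 2)
    simp only [List.length_append] at this ⊢
    omega
  simp only [List.length_append]
  rcases List.getElem?_append_eq_some hi with hi | ⟨hi1, hi⟩ <;>
    rcases List.getElem?_append_eq_some hk with hk | ⟨hk3, hk⟩
  · have := msList_append_le hi hk hadj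
    omega
  · have := msList_append_le hi hk hadj
    omega
  · exact absurd hadj (h12.not_edgesAdj_of_mem_append (hL 1) (hL 2) e
      (List.mem_append_left _ (List.mem_of_getElem? hi)) e'
      (List.mem_append_right _ (List.mem_of_getElem? hk)))
  · have := msList_append_le hi hk hadj
    omega

/-- Lemma: let `M_0, M_1, M_2, M_3` be pairwise edge-disjoint matchings of sizes
`m_0, m_1, m_2, m_3` such that `M_0 ∪ M_1`, `M_1 ∪ M_2` and `M_2 ∪ M_3` are also
matchings.  Then for any orderings `ℓ_0, ℓ_1, ℓ_2, ℓ_3`,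
`ms(ℓ_0 ∨ ℓ_1 ∨ ℓ_2 ∨ ℓ_3) ≥
  min{ms(ℓ_0 ∨ ℓ_2) + m_1, ms(ℓ_1 ∨ ℓ_3) + m_2, ms(ℓ_0 ∨ ℓ_3) + m_1 + m_2}`. -/
theorem msList_append_four {V : Type*} [Fintype V] (M : Fin 4 → SimpleGraph V)
    (L : Fin 4 → List (Sym2 V))
    (hmatch : ∀ i, IsMatchingGraph (M i))
    (hdisj : ∀ i j, i ≠ j → Disjoint (M i).edgeSet (M j).edgeSet)
    (hne : ∀ i, (M i).edgeSet.Nonempty)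
    (h01 : IsMatchingGraph (M 0 ⊔ M 1)) (h12 : IsMatchingGraph (M 1 ⊔ M 2))
    (h23 : IsMatchingGraph (M 2 ⊔ M 3))
    (hL : ∀ i, IsOrdering (M i) (L i)) :
    min (msList (L 0 ++ L 2) + numEdges (M 1))
      (min (msList (L 1 ++ L 3) + numEdges (M 2))
        (msList (L 0 ++ L 3) + numEdges (M 1) + numEdges (M 2)))
      ≤ msList (L 0 ++ L 1 ++ L 2 ++ L 3) :=
  msList_append_four_general M L h01 h12 h23 hL
end

section
/- Let t ≥ 1 be an integer and let H_0 and H_1 be edge-disjoint matchings with |E(H_0)| = |E(H_1)| = t. Then there exist orderings ℓ_0 of H_0 and ℓ_1 of H_1 such that cms(ℓ_0 ∨ ℓ_1) ≥ t − 1. -/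
/-!
Fill the positions `0, 1, 2, …` of `ℓ₀` and `ℓ₁` greedily, one edge of each matching per position,
so that adjacent edges `e ∈ H₀`, `f ∈ H₁` get positions differing by at most one; in `ℓ₀ ∨ ℓ₁`
they are then at cyclic distance between `t - 1` and `t + 1`. Every edge meets at most two edges
of the other matching, so once `e` and `f` occupy position `p`, each has at most one unplaced
neighbour, which is forced into position `p + 1`. On a side where nothing is forced we take a
neighbour of the edge placed on the other side, or, if it has none, an edge with at most one
unplaced neighbour, which exists by double counting since fewer edges remain on the other side.
-/

open SimpleGraph

open Finset Function

section Aligned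

variable {α β : Type*} (r : α → β → Prop)

def Aligned (L0 : List α) (L1 : List β) : Prop :=
  ∀ p q a b, L0[p]? = some a → L1[q]? = some b → r a b → p ≤ q + 1 ∧ q ≤ p + 1

variable {r}

theorem List.Nodup.eq_of_getElem?_eq {L : List α} (hnd : L.Nodup) {i j : ℕ} {x : α}
    (hi : L[i]? = some x) (hj : L[j]? = some x) : i = j :=
  (List.getElem?_inj (List.getElem?_eq_some_iff.mp hi).1 hnd).mp (hi.trans hj.symm)

theorem Aligned.cons {L0 : List α} {L1 : List β} (h : Aligned r L0 L1) (hnd0 : L0.Nodup)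
    (hnd1 : L1.Nodup) {a : α} {b : β} (ha : ∀ y ∈ L1, r a y → L1[0]? = some y)
    (hb : ∀ x ∈ L0, r x b → L0[0]? = some x) : Aligned r (a :: L0) (b :: L1) := by
  rintro (_ | p) (_ | q) x y hx hy hxy
  · omega
  · simp only [List.getElem?_cons_zero, Option.some.injEq, List.getElem?_cons_succ] at hx hy
    subst hx
    have := hnd1.eq_of_getElem?_eq hy (ha y (List.mem_of_getElem? hy) hxy)
    omega
  · simp only [List.getElem?_cons_zero, Option.some.injEq, List.getElem?_cons_succ] at hx hy
    subst hy
    have := hnd0.eq_of_getElem?_eq hx (hb x (List.mem_of_getElem? hx) hxy)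
    omega
  · simp only [List.getElem?_cons_succ] at hx hy
    have := h p q x y hx hy hxy
    omega

variable [∀ a b, Decidable (r a b)]

namespace Finset

theorem bipartiteAbove_mono {t t' : Finset β} (h : t ⊆ t') (a : α) :
    t.bipartiteAbove r a ⊆ t'.bipartiteAbove r a :=
  filter_subset_filter _ h

theorem bipartiteBelow_mono {s s' : Finset α} (h : s ⊆ s') (b : β) :
    s.bipartiteBelow r b ⊆ s'.bipartiteBelow r b :=
  filter_subset_filter _ h

theorem card_bipartiteAbove_erase_le [DecidableEq β] {t : Finset β} {a : α} {b : β} {k : ℕ}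
    (hb : b ∈ t) (hab : r a b) (h : #(t.bipartiteAbove r a) ≤ k + 1) :
    #((t.erase b).bipartiteAbove r a) ≤ k := by
  rw [bipartiteAbove, filter_erase, card_erase_of_mem (mem_filter.mpr ⟨hb, hab⟩)]
  exact Nat.sub_le_of_le_add h

theorem card_bipartiteBelow_erase_le [DecidableEq α] {s : Finset α} {a : α} {b : β} {k : ℕ}
    (ha : a ∈ s) (hab : r a b) (h : #(s.bipartiteBelow r b) ≤ k + 1) :
    #((s.erase a).bipartiteBelow r b) ≤ k := by
  rw [bipartiteBelow, filter_erase, card_erase_of_mem (mem_filter.mpr ⟨ha, hab⟩)]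
  exact Nat.sub_le_of_le_add h

theorem exists_card_bipartiteBelow_lt {d : ℕ} (hd : 0 < d) {A : Finset α} {B : Finset β}
    (hA : ∀ a ∈ A, #(B.bipartiteAbove r a) ≤ d) (hcard : #A < #B) :
    ∃ b ∈ B, #(A.bipartiteBelow r b) < d := by
  by_contra! h
  have := card_nsmul_le_card_nsmul' r h hA
  simp only [smul_eq_mul] at this
  exact absurd (Nat.le_of_mul_le_mul_right this hd) (not_le.mpr hcard)

theorem exists_mem_subset_singleton {S A : Finset α} (hS : S ⊆ A) (h1 : #S ≤ 1)
    (hA : A.Nonempty) : ∃ a ∈ A, S ⊆ {a} := by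
  rcases S.eq_empty_or_nonempty with rfl | ⟨a, ha⟩
  · obtain ⟨a, ha⟩ := hA
    exact ⟨a, ha, empty_subset _⟩
  · exact ⟨a, hS ha, fun x hx => mem_singleton.mpr (card_le_one.mp h1 x hx a ha)⟩

end Finset

variable [DecidableEq α] [DecidableEq β]

theorem exists_partner_card_bipartite_erase_le_one {A : Finset α} {B : Finset β}
    (hcard : #A ≤ #B)
    (hA : ∀ a ∈ A, #(B.bipartiteAbove r a) ≤ 2) (hB : ∀ b ∈ B, #(A.bipartiteBelow r b) ≤ 2)
    {a : α} (ha : a ∈ A) :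
    ∃ b ∈ B, #((B.erase b).bipartiteAbove r a) ≤ 1 ∧ #((A.erase a).bipartiteBelow r b) ≤ 1 := by
  obtain ⟨b, hb⟩ | hempty := (B.bipartiteAbove r a).eq_empty_or_nonempty.symm
  · obtain ⟨hbB, hab⟩ := (mem_bipartiteAbove r).mp hb
    exact ⟨b, hbB, card_bipartiteAbove_erase_le hbB hab (hA a ha),
      card_bipartiteBelow_erase_le ha hab (hB b hbB)⟩
  · have hcard' : #(A.erase a) < #B := by
      rw [card_erase_of_mem ha]
      have := card_pos.mpr ⟨a, ha⟩
      omega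
    obtain ⟨b, hb, hlt⟩ := exists_card_bipartiteBelow_lt (r := r) two_pos
      (fun x hx => hA x (mem_of_mem_erase hx)) hcard'
    refine ⟨b, hb, ?_, by omega⟩
    exact (card_le_card (bipartiteAbove_mono (erase_subset b B) a)).trans (by simp [hempty])

theorem exists_pair_card_bipartite_erase_le_one {A : Finset α} {B : Finset β}
    (hcard : #A = #B) (hne : A.Nonempty)
    (hA : ∀ a ∈ A, #(B.bipartiteAbove r a) ≤ 2) (hB : ∀ b ∈ B, #(A.bipartiteBelow r b) ≤ 2)
    {SA : Finset α} {SB : Finset β} (hSA : SA ⊆ A) (hSB : SB ⊆ B) (hSA1 : #SA ≤ 1)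
    (hSB1 : #SB ≤ 1) (hSA2 : ∀ a ∈ SA, #(B.bipartiteAbove r a) ≤ 1)
    (hSB2 : ∀ b ∈ SB, #(A.bipartiteBelow r b) ≤ 1) :
    ∃ a ∈ A, ∃ b ∈ B, SA ⊆ {a} ∧ SB ⊆ {b} ∧
      #((B.erase b).bipartiteAbove r a) ≤ 1 ∧ #((A.erase a).bipartiteBelow r b) ≤ 1 := by
  obtain ⟨a, ha, hSa⟩ := exists_mem_subset_singleton hSA hSA1 hne
  obtain ⟨b, hb, hSb⟩ :=
    exists_mem_subset_singleton hSB hSB1 (card_pos.mp (hcard ▸ card_pos.mpr hne))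
  rcases SA.eq_empty_or_nonempty with rfl | ⟨a₀, ha₀⟩
  · obtain ⟨a', ha', h1, h2⟩ :=
      exists_partner_card_bipartite_erase_le_one (r := swap r) hcard.ge hB hA hb
    exact ⟨a', ha', b, hb, empty_subset _, hSb, h2, h1⟩
  rcases SB.eq_empty_or_nonempty with rfl | ⟨b₀, hb₀⟩
  · obtain ⟨b', hb', h1, h2⟩ := exists_partner_card_bipartite_erase_le_one hcard.le hA hB ha
    exact ⟨a, ha, b', hb', hSa, empty_subset _, h1, h2⟩
  obtain rfl := mem_singleton.mp (hSa ha₀)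
  obtain rfl := mem_singleton.mp (hSb hb₀)
  exact ⟨a₀, ha, b₀, hb, hSa, hSb,
    (card_le_card (bipartiteAbove_mono (erase_subset _ _) _)).trans (hSA2 _ ha₀),
    (card_le_card (bipartiteBelow_mono (erase_subset _ _) _)).trans (hSB2 _ hb₀)⟩

/-- `SA` and `SB` hold the neighbours of a pair placed just before the lists start, so they have
to come first. -/
theorem exists_aligned_with_forced_heads {n : ℕ} {A : Finset α} {B : Finset β} (hAn : #A = n)
    (hBn : #B = n) (hA : ∀ a ∈ A, #(B.bipartiteAbove r a) ≤ 2)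
    (hB : ∀ b ∈ B, #(A.bipartiteBelow r b) ≤ 2)
    {SA : Finset α} {SB : Finset β} (hSA : SA ⊆ A) (hSB : SB ⊆ B) (hSA1 : #SA ≤ 1)
    (hSB1 : #SB ≤ 1) (hSA2 : ∀ a ∈ SA, #(B.bipartiteAbove r a) ≤ 1)
    (hSB2 : ∀ b ∈ SB, #(A.bipartiteBelow r b) ≤ 1) :
    ∃ L0 L1, L0.Nodup ∧ L0.toFinset = A ∧ L1.Nodup ∧ L1.toFinset = B ∧ Aligned r L0 L1 ∧
      (∀ a ∈ SA, L0[0]? = some a) ∧ (∀ b ∈ SB, L1[0]? = some b) := by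
  induction n generalizing A B SA SB with
  | zero =>
    obtain rfl := card_eq_zero.mp hAn
    obtain rfl := card_eq_zero.mp hBn
    obtain rfl := subset_empty.mp hSA
    obtain rfl := subset_empty.mp hSB
    exact ⟨[], [], List.nodup_nil, rfl, List.nodup_nil, rfl, by simp [Aligned], by simp, by simp⟩
  | succ n ih =>
    obtain ⟨a, ha, b, hb, hSa, hSb, hNa, hNb⟩ :=
      exists_pair_card_bipartite_erase_le_one (hAn.trans hBn.symm) (card_pos.mp (by omega))
        hA hB hSA hSB hSA1 hSB1 hSA2 hSB2
    obtain ⟨L0, L1, hnd0, hL0, hnd1, hL1, hal, hhead0, hhead1⟩ :=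
      ih (A := A.erase a) (B := B.erase b) (by simp [card_erase_of_mem ha, hAn])
        (by simp [card_erase_of_mem hb, hBn])
        (fun x hx => (card_le_card (bipartiteAbove_mono (erase_subset _ _) _)).trans
          (hA x (mem_of_mem_erase hx)))
        (fun y hy => (card_le_card (bipartiteBelow_mono (erase_subset _ _) _)).trans
          (hB y (mem_of_mem_erase hy)))
        (filter_subset _ _) (filter_subset _ _) hNb hNa
        (fun x hx => have hx := (mem_bipartiteBelow r).mp hx
          card_bipartiteAbove_erase_le hb hx.2 (hA x (mem_of_mem_erase hx.1)))
        (fun y hy => have hy := (mem_bipartiteAbove r).mp hy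
          card_bipartiteBelow_erase_le ha hy.2 (hB y (mem_of_mem_erase hy.1)))
    have hL0mem : ∀ x, x ∈ L0 ↔ x ∈ A.erase a := fun x => by rw [← hL0, List.mem_toFinset]
    have hL1mem : ∀ y, y ∈ L1 ↔ y ∈ B.erase b := fun y => by rw [← hL1, List.mem_toFinset]
    refine ⟨a :: L0, b :: L1, ?_, ?_, ?_, ?_, ?_, ?_, ?_⟩
    · exact List.nodup_cons.mpr ⟨fun h => notMem_erase a A ((hL0mem a).mp h), hnd0⟩
    · rw [List.toFinset_cons, hL0, insert_erase ha]
    · exact List.nodup_cons.mpr ⟨fun h => notMem_erase b B ((hL1mem b).mp h), hnd1⟩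
    · rw [List.toFinset_cons, hL1, insert_erase hb]
    · refine hal.cons hnd0 hnd1 (fun y hy hay => hhead1 y ?_) (fun x hx hxb => hhead0 x ?_)
      · exact (mem_bipartiteAbove r).mpr ⟨(hL1mem y).mp hy, hay⟩
      · exact (mem_bipartiteBelow r).mpr ⟨(hL0mem x).mp hx, hxb⟩
    · exact fun x hx => mem_singleton.mp (hSa hx) ▸ rfl
    · exact fun y hy => mem_singleton.mp (hSb hy) ▸ rfl

theorem exists_aligned {A : Finset α} {B : Finset β} (hcard : #A = #B)
    (hA : ∀ a ∈ A, #(B.bipartiteAbove r a) ≤ 2) (hB : ∀ b ∈ B, #(A.bipartiteBelow r b) ≤ 2) :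
    ∃ L0 L1, L0.Nodup ∧ L0.toFinset = A ∧ L1.Nodup ∧ L1.toFinset = B ∧ Aligned r L0 L1 := by
  obtain ⟨L0, L1, hnd0, hL0, hnd1, hL1, hal, -⟩ :=
    exists_aligned_with_forced_heads rfl hcard.symm hA hB (empty_subset A) (empty_subset B)
      (by simp) (by simp) (by simp) (by simp)
  exact ⟨L0, L1, hnd0, hL0, hnd1, hL1, hal⟩

end Aligned

section Matchings

variable {V : Type*}

theorem edgesAdj_comm {e f : Sym2 V} : EdgesAdj e f ↔ EdgesAdj f e :=
  ⟨fun ⟨hne, v, he, hf⟩ => ⟨hne.symm, v, hf, he⟩, fun ⟨hne, v, hf, he⟩ => ⟨hne.symm, v, he, hf⟩⟩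

theorem IsOrdering.of_toFinset_eq [Fintype V] [DecidableEq V] {G : SimpleGraph V}
    [Fintype G.edgeSet] {L : List (Sym2 V)} (hnd : L.Nodup) (hL : L.toFinset = G.edgeFinset) :
    IsOrdering G L :=
  ⟨hnd, fun e => by rw [← List.mem_toFinset, hL, mem_edgeFinset]⟩

theorem IsOrdering.numEdges_eq [DecidableEq V] {G : SimpleGraph V} {L : List (Sym2 V)}
    (hL : IsOrdering G L) : numEdges G = L.length := by
  have : G.edgeSet = ↑L.toFinset := Set.ext fun e => by simp [hL.2 e]
  rw [numEdges, this, Nat.card_coe_set_eq, Set.ncard_coe_finset,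
    List.toFinset_card_of_nodup hL.1]

theorem le_cmsList {L : List (Sym2 V)} {s : ℕ} (h1 : 1 ≤ s) (hs : s ≤ L.length)
    (h : ∀ i j e e', i < j → L[i]? = some e → L[j]? = some e' → EdgesAdj e e' →
      s ≤ min (j - i) (L.length - (j - i))) : s ≤ cmsList L :=
  le_csSup ⟨L.length, fun _ hx => hx.2.1⟩ ⟨h1, hs, h⟩

theorem le_cmsList_append_of_aligned {H0 H1 : SimpleGraph V} (h0 : IsMatchingGraph H0)
    (h1 : IsMatchingGraph H1) {L0 L1 : List (Sym2 V)} (hL0 : IsOrdering H0 L0)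
    (hL1 : IsOrdering H1 L1) {t : ℕ} (hs0 : numEdges H0 = t) (hs1 : numEdges H1 = t)
    (hal : Aligned EdgesAdj L0 L1) : t - 1 ≤ cmsList (L0 ++ L1) := by
  classical
  have hlen0 : L0.length = t := hL0.numEdges_eq ▸ hs0
  have hlen1 : L1.length = t := hL1.numEdges_eq ▸ hs1
  rcases Nat.lt_or_ge t 2 with ht | ht
  · simp [Nat.sub_eq_zero_of_le (Nat.le_of_lt_succ ht)]
  refine le_cmsList (by omega) (by simp; omega) fun i j e e' hij he he' hadj => ?_
  rw [List.length_append, hlen0, hlen1]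
  rcases Nat.lt_or_ge j t with hj | hj
  · rw [List.getElem?_append_left (by omega)] at he he'
    exact absurd hadj (h0 e ((hL0.2 e).mp (List.mem_of_getElem? he))
      e' ((hL0.2 e').mp (List.mem_of_getElem? he')))
  rw [List.getElem?_append_right (by omega)] at he'
  rcases Nat.lt_or_ge i t with hi | hi
  · rw [List.getElem?_append_left (by omega)] at he
    have := hal i (j - L0.length) e e' he he' hadj
    omega
  · rw [List.getElem?_append_right (by omega)] at he
    exact absurd hadj (h1 e ((hL1.2 e).mp (List.mem_of_getElem? he))
      e' ((hL1.2 e').mp (List.mem_of_getElem? he')))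

variable [∀ e f : Sym2 V, Decidable (EdgesAdj e f)]

theorem card_bipartiteAbove_edgesAdj_le_two [DecidableEq V] {M : Finset (Sym2 V)}
    (hM : ∀ e ∈ M, ∀ e' ∈ M, ¬ EdgesAdj e e') (e : Sym2 V) :
    #(M.bipartiteAbove EdgesAdj e) ≤ 2 := by
  induction e using Sym2.ind with
  | h u v =>
    have hle_one (x : V) : #{f ∈ M | x ∈ f} ≤ 1 := card_le_one.mpr fun f hf g hg => by
      by_contra hne
      exact hM f (mem_filter.mp hf).1 g (mem_filter.mp hg).1
        ⟨hne, x, (mem_filter.mp hf).2, (mem_filter.mp hg).2⟩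
    have hsub : M.bipartiteAbove EdgesAdj s(u, v) ⊆ {f ∈ M | u ∈ f} ∪ {f ∈ M | v ∈ f} := by
      intro f hf
      obtain ⟨hfM, -, x, hx, hxf⟩ := (mem_bipartiteAbove _).mp hf
      rcases Sym2.mem_iff.mp hx with rfl | rfl <;> simp [hfM, hxf]
    calc #(M.bipartiteAbove EdgesAdj s(u, v))
        ≤ #{f ∈ M | u ∈ f} + #{f ∈ M | v ∈ f} := (card_le_card hsub).trans (card_union_le _ _)
      _ ≤ 2 := add_le_add (hle_one u) (hle_one v)

theorem card_bipartiteBelow_edgesAdj_le_two [DecidableEq V] {M : Finset (Sym2 V)}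
    (hM : ∀ e ∈ M, ∀ e' ∈ M, ¬ EdgesAdj e e') (e : Sym2 V) :
    #(M.bipartiteBelow EdgesAdj e) ≤ 2 := by
  have : M.bipartiteBelow EdgesAdj e = M.bipartiteAbove EdgesAdj e :=
    filter_congr fun _ _ => edgesAdj_comm
  exact this ▸ card_bipartiteAbove_edgesAdj_le_two hM e

end Matchings

theorem exists_orderings_cmsList_ge_of_matchings_general {V : Type*} [Fintype V] (t : ℕ)
    (H0 H1 : SimpleGraph V)
    (h0 : IsMatchingGraph H0) (h1 : IsMatchingGraph H1)
    (hs0 : numEdges H0 = t) (hs1 : numEdges H1 = t) :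
    ∃ L0 L1 : List (Sym2 V), IsOrdering H0 L0 ∧ IsOrdering H1 L1 ∧
      t - 1 ≤ cmsList (L0 ++ L1) := by
  classical
  have hcard (H : SimpleGraph V) : #H.edgeFinset = numEdges H := by
    rw [edgeFinset_card, numEdges, Nat.card_eq_fintype_card]
  have hM (H : SimpleGraph V) (h : IsMatchingGraph H) :
      ∀ e ∈ H.edgeFinset, ∀ e' ∈ H.edgeFinset, ¬ EdgesAdj e e' :=
    fun e he e' he' => h e (mem_edgeFinset.mp he) e' (mem_edgeFinset.mp he')
  obtain ⟨L0, L1, hnd0, hL0, hnd1, hL1, hal⟩ := exists_aligned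
    (by rw [hcard, hcard, hs0, hs1])
    (fun _ _ => card_bipartiteAbove_edgesAdj_le_two (hM H1 h1) _)
    (fun _ _ => card_bipartiteBelow_edgesAdj_le_two (hM H0 h0) _)
  have hord0 := IsOrdering.of_toFinset_eq hnd0 hL0
  have hord1 := IsOrdering.of_toFinset_eq hnd1 hL1
  exact ⟨L0, L1, hord0, hord1, le_cmsList_append_of_aligned h0 h1 hord0 hord1 hs0 hs1 hal⟩

/-- Lemma: let `H_0`, `H_1` be edge-disjoint matchings of equal size `t ≥ 1`.  Then there
are orderings `ℓ_0` of `H_0` and `ℓ_1` of `H_1` with `cms(ℓ_0 ∨ ℓ_1) ≥ t - 1`. -/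
theorem exists_orderings_cmsList_ge_of_matchings {V : Type*} [Fintype V] (t : ℕ)
    (ht : 1 ≤ t) (H0 H1 : SimpleGraph V)
    (h0 : IsMatchingGraph H0) (h1 : IsMatchingGraph H1)
    (hdisj : Disjoint H0.edgeSet H1.edgeSet)
    (hs0 : numEdges H0 = t) (hs1 : numEdges H1 = t) :
    ∃ L0 L1 : List (Sym2 V), IsOrdering H0 L0 ∧ IsOrdering H1 L1 ∧
      t - 1 ≤ cmsList (L0 ++ L1) :=
  exists_orderings_cmsList_ge_of_matchings_general t H0 H1 h0 h1 hs0 hs1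
end

section
/- Let H be a graph with at least one edge and let G be a subgraph of H with at least one edge and with matching number ν. Then cms(H) ≤ ν·|E(H)|/|E(G)|. -/
open SimpleGraph

private lemma window_inv (m i t : ℕ) (hi : i < m) (ht : t < m) :
    (i + m - (i + m - t) % m) % m = t := by
  rcases le_or_gt t i with h | h
  · have e1 : (i + m - t) % m = i - t := by
      have h1 : i + m - t = (i - t) + m := by omega
      rw [h1, Nat.add_mod_right]; exact Nat.mod_eq_of_lt (by omega)
    have h2 : i + m - (i - t) = t + m := by omega
    rw [e1, h2, Nat.add_mod_right]; exact Nat.mod_eq_of_lt ht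
  · rw [Nat.mod_eq_of_lt (show i + m - t < m by omega)]
    have h2 : i + m - (i + m - t) = t := by omega
    rw [h2]; exact Nat.mod_eq_of_lt ht

private lemma window_card (m s i : ℕ) (hs : s ≤ m) (hi : i < m) :
    ((Finset.range m).filter (fun t => (i + m - t) % m < s)).card = s := by
  classical
  have hm : 0 < m := lt_of_le_of_lt (Nat.zero_le i) hi
  have hmain : ((Finset.range m).filter (fun t => (i + m - t) % m < s)).card
      = (Finset.range s).card := by
    refine Finset.card_bij' (fun t _ => (i + m - t) % m) (fun a _ => (i + m - a) % m)
      ?_ ?_ ?_ ?_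
    · intro t ht
      simp only [Finset.mem_filter, Finset.mem_range] at ht ⊢
      exact ht.2
    · intro a ha
      simp only [Finset.mem_filter, Finset.mem_range] at ha ⊢
      refine ⟨Nat.mod_lt _ hm, ?_⟩
      rw [window_inv m i a hi (lt_of_lt_of_le ha hs)]
      exact ha
    · intro t ht
      simp only [Finset.mem_filter, Finset.mem_range] at ht
      exact window_inv m i t hi ht.1
    · intro a ha
      simp only [Finset.mem_range] at ha
      exact window_inv m i a hi (lt_of_lt_of_le ha hs)
  rw [hmain, Finset.card_range]

private lemma matchingSet_card_le {V : Type*} [Fintype V] (G : SimpleGraph V)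
    (M : Finset (Sym2 V)) (hM : IsMatchingSet G M) : M.card ≤ matchingNumber G := by
  classical
  apply le_csSup
  · refine ⟨Fintype.card (Sym2 V), ?_⟩
    rintro k ⟨N, _, rfl⟩
    exact Finset.card_le_univ N
  · exact ⟨M, hM, rfl⟩

private lemma core_count {V : Type*} [Fintype V] (H G : SimpleGraph V) (hsub : G ≤ H)
    (L : List (Sym2 V)) (hL : IsOrdering H L) (s : ℕ) (hs1 : 1 ≤ s) (hsm : s ≤ L.length)
    (hprop : ∀ i j e e', i < j → L[i]? = some e → L[j]? = some e' → EdgesAdj e e' →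
      s ≤ min (j - i) (L.length - (j - i))) :
    s * numEdges G ≤ matchingNumber G * L.length := by
  classical
  set m := L.length with hmdef
  have hm0 : 0 < m := lt_of_lt_of_le hs1 hsm
  set d : Sym2 V := L[0]'hm0 with hd
  set f : ℕ → Sym2 V := fun i => L.getD i d with hf
  have hfget : ∀ i (h : i < m), f i = L[i] := fun i h => L.getD_eq_getElem d h
  have hfsome : ∀ i (h : i < m), L[i]? = some (f i) := by
    intro i h; rw [hfget i h]; exact List.getElem?_eq_getElem h
  have hinj : ∀ i j, i < m → j < m → f i = f j → i = j := by
    intro i j hi hj hij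
    rw [hfget i hi, hfget j hj] at hij
    exact (List.Nodup.getElem_inj_iff hL.1).mp hij
  set posG : Finset ℕ := (Finset.range m).filter (fun i => f i ∈ G.edgeSet) with hposG
  have himg : posG.image f = (Set.toFinite G.edgeSet).toFinset := by
    ext e
    simp only [Finset.mem_image, Set.Finite.mem_toFinset, hposG, Finset.mem_filter,
      Finset.mem_range]
    constructor
    · rintro ⟨i, ⟨_, he⟩, rfl⟩; exact he
    · intro he
      have heH : e ∈ L := (hL.2 e).mpr (SimpleGraph.edgeSet_mono hsub he)
      obtain ⟨i, hi, hie⟩ := List.mem_iff_getElem.mp heH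
      exact ⟨i, ⟨⟨hi, by rw [hfget i hi]; rwa [hie]⟩, by rw [hfget i hi]; exact hie⟩⟩
  have hcardG : posG.card = numEdges G := by
    have h1 : (posG.image f).card = posG.card := by
      apply Finset.card_image_of_injOn
      intro i hi j hj hij
      simp only [hposG, Finset.coe_filter, Set.mem_setOf_eq, Finset.mem_range] at hi hj
      exact hinj i j hi.1 hj.1 hij
    rw [← h1, himg]
    rw [numEdges, Nat.card_coe_set_eq, Set.ncard_eq_toFinset_card G.edgeSet
      (Set.toFinite _)]
  have hwin : ∀ t < m, (posG.filter (fun i => (i + m - t) % m < s)).card ≤ matchingNumber G := by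
    intro t ht
    set Mt := posG.filter (fun i => (i + m - t) % m < s) with hMt
    have hMtsub : ∀ i ∈ Mt, i < m ∧ f i ∈ G.edgeSet ∧ (i + m - t) % m < s := by
      intro i hi
      simp only [hMt, hposG, Finset.mem_filter, Finset.mem_range] at hi
      exact ⟨hi.1.1, hi.1.2, hi.2⟩
    have hcard : (Mt.image f).card = Mt.card := by
      apply Finset.card_image_of_injOn
      intro i hi j hj hij
      exact hinj i j (hMtsub i hi).1 (hMtsub j hj).1 hij
    have hmatch : IsMatchingSet G (Mt.image f) := by
      constructor
      · intro e he
        simp only [Finset.coe_image, Set.mem_image, Finset.mem_coe] at he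
        obtain ⟨i, hi, rfl⟩ := he
        exact (hMtsub i hi).2.1
      · intro e he e' he' hadj
        simp only [Finset.mem_image] at he he'
        obtain ⟨i, hi, rfl⟩ := he
        obtain ⟨j, hj, rfl⟩ := he'
        obtain ⟨him, _, hia⟩ := hMtsub i hi
        obtain ⟨hjm, _, hja⟩ := hMtsub j hj
        have hne : i ≠ j := fun h => hadj.1 (by rw [h])
        have key : ∀ i j, i < m → j < m → i < j →
            (i + m - t) % m < s → (j + m - t) % m < s →
            EdgesAdj (f i) (f j) → False := by
          intro i j him hjm hij hia hja hadj
          have hprop' := hprop i j (f i) (f j) hij (hfsome i him) (hfsome j hjm) hadj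
          set a := (i + m - t) % m with ha
          set b := (j + m - t) % m with hb
          have h1 : j + m - t = (i + m - t) + (j - i) := by omega
          have hab : b = (a + (j - i)) % m := by
            calc b = ((i + m - t) + (j - i)) % m := by rw [hb, h1]
              _ = ((i + m - t) % m + (j - i) % m) % m := Nat.add_mod _ _ _
              _ = (a + (j - i)) % m := by
                  rw [← ha, Nat.mod_eq_of_lt (show j - i < m by omega)]
          have ham : a < m := Nat.mod_lt _ hm0
          have hmin1 : s ≤ j - i := le_trans hprop' (min_le_left _ _)
          have hmin2 : s ≤ m - (j - i) := le_trans hprop' (min_le_right _ _)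
          rcases lt_or_ge (a + (j - i)) m with h | h
          · rw [Nat.mod_eq_of_lt h] at hab
            omega
          · rw [Nat.mod_eq_sub_mod h, Nat.mod_eq_of_lt (by omega)] at hab
            omega
        rcases lt_trichotomy i j with h | h | h
        · exact key i j him hjm h hia hja hadj
        · exact hne h
        · exact key j i hjm him h hja hia ⟨fun hh => hadj.1 hh.symm,
            by obtain ⟨_, v, hv1, hv2⟩ := hadj; exact ⟨v, hv2, hv1⟩⟩
    calc Mt.card = (Mt.image f).card := hcard.symm
      _ ≤ matchingNumber G := matchingSet_card_le G _ hmatch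
  have hsum : ∑ t ∈ Finset.range m, (posG.filter (fun i => (i + m - t) % m < s)).card
      = posG.card * s := by
    simp_rw [Finset.card_filter]
    rw [Finset.sum_comm]
    have h : ∀ i ∈ posG,
        (∑ t ∈ Finset.range m, if (i + m - t) % m < s then 1 else 0) = s := by
      intro i hi
      rw [← Finset.card_filter]
      exact window_card m s i hsm (Finset.mem_range.mp (Finset.mem_filter.mp hi).1)
    rw [Finset.sum_congr rfl h, Finset.sum_const, smul_eq_mul]
  calc s * numEdges G = posG.card * s := by rw [hcardG, Nat.mul_comm]
    _ = ∑ t ∈ Finset.range m, (posG.filter (fun i => (i + m - t) % m < s)).card := hsum.symm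
    _ ≤ ∑ _t ∈ Finset.range m, matchingNumber G :=
        Finset.sum_le_sum (fun t ht => hwin t (Finset.mem_range.mp ht))
    _ = matchingNumber G * m := by
        rw [Finset.sum_const, Finset.card_range, smul_eq_mul, Nat.mul_comm]

private lemma cmsList_cases {V : Type*} (L : List (Sym2 V)) :
    cmsList L = 0 ∨ (1 ≤ cmsList L ∧ cmsList L ≤ L.length ∧ ∀ i j e e', i < j →
      L[i]? = some e → L[j]? = some e' → EdgesAdj e e' →
      cmsList L ≤ min (j - i) (L.length - (j - i))) := by
  unfold cmsList
  set T := {s | 1 ≤ s ∧ s ≤ L.length ∧ ∀ i j e e', i < j →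
    L[i]? = some e → L[j]? = some e' → EdgesAdj e e' →
    s ≤ min (j - i) (L.length - (j - i))} with hT
  rcases T.eq_empty_or_nonempty with h | h
  · left; rw [h, csSup_empty]; rfl
  · right; exact Nat.sSup_mem h ⟨L.length, fun s hs => hs.2.1⟩

/-- Lemma: for a graph `H` and a subgraph `G` of `H` with matching number `ν`,
`cms(H) ≤ ν |E(H)| / |E(G)|`. -/
theorem cms_le_matchingNumber_mul {V : Type*} [Fintype V] (H G : SimpleGraph V)
    (hsub : G ≤ H) (hH : H.edgeSet.Nonempty) (hG : G.edgeSet.Nonempty) :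
    (cms H : ℝ) ≤ (matchingNumber G : ℝ) * (numEdges H : ℝ) / (numEdges G : ℝ) := by
  classical
  have heG : 0 < numEdges G := by
    rw [numEdges]
    have : Nonempty ↑G.edgeSet := hG.to_subtype
    exact Nat.card_pos
  have key : cms H ≤ (matchingNumber G * numEdges H) / numEdges G := by
    apply csSup_le
    · refine ⟨cmsList (Set.toFinite H.edgeSet).toFinset.toList,
        (Set.toFinite H.edgeSet).toFinset.toList, ⟨Finset.nodup_toList _, ?_⟩, rfl⟩
      intro e; rw [Finset.mem_toList, Set.Finite.mem_toFinset]
    · rintro k ⟨L, hL, rfl⟩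
      rw [Nat.le_div_iff_mul_le heG]
      have hlen : L.length = numEdges H := by
        have hset : H.edgeSet = ↑L.toFinset := by
          ext e
          rw [Finset.mem_coe, List.mem_toFinset]
          exact (hL.2 e).symm
        rw [numEdges, Nat.card_coe_set_eq, hset, Set.ncard_coe_finset,
          List.toFinset_card_of_nodup hL.1]
      rw [← hlen]
      rcases cmsList_cases L with h | ⟨hs1, hsm, hprop⟩
      · rw [h, Nat.zero_mul]; exact Nat.zero_le _
      · exact core_count H G hsub L hL _ hs1 hsm hprop
  calc (cms H : ℝ) ≤ (((matchingNumber G * numEdges H) / numEdges G : ℕ) : ℝ) :=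
        Nat.cast_le.mpr key
    _ ≤ ((matchingNumber G * numEdges H : ℕ) : ℝ) / ((numEdges G : ℕ) : ℝ) := Nat.cast_div_le
    _ = (matchingNumber G : ℝ) * (numEdges H : ℝ) / (numEdges G : ℝ) := by push_cast; ring
end
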